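/- arXiv:2208.00448 — 6 statements merged into one kernel-verified Lean document; each statement's English description precedes it below -/
import Mathlib

section
/- For every p ∈ [1,∞), every T ∈ (0,∞), every N ∈ ℕ with N ≥ 1 (writing Δt = T/N) and every n ∈ {0,…,N}, one has (𝔼[‖X_n^{ε,Δt} − X_n^{0,Δt}‖^p])^{1/p} → 0 as ε → 0. -/
/-!
Pathwise, the time fed to `Φ` at step `k` is `τₖ = Δt mₖ₊₁ / ε`, and the implicit OU step gives
`ε mₖ₊₁ = (ε mₖ + Δβₖ) ε² / (ε² + Δt)` and `τₖ = (ε mₖ + Δβₖ) Δt / (ε² + Δt)`. Hence `ε mₖ → 0`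
and `τₖ → Δβₖ` as `ε → 0`, and continuity of `Φ` gives `X_n^ε → X_n^0` for every `ω`. The same
identities bound `|τₖ|` by `R = ε₀ M₀ + ∑ |Δβⱼ|` uniformly in `ε`, so the Lipschitz estimate for `Φ`
yields `‖X_n^ε - X_n^0‖ ≤ exp (c (1 + R))`. Gaussian increments have exponential moments of every
order, and so has their sum since `exp (a + b) ≤ exp (2a) + exp (2b)`; dominated convergence
concludes.
-/

open MeasureTheory ProbabilityTheory Real Set Filter

/-- Pathwise representation of the Ornstein--Uhlenbeck process
`m^ε(t) = e^{−t/ε²} m₀ + ε⁻¹ β(t) − ε⁻³ ∫₀ᵗ e^{−(t−s)/ε²} β(s) ds`. -/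
noncomputable def mOU {Ω : Type*} (β : ℝ → Ω → ℝ) (ε m0 t : ℝ) (ω : Ω) : ℝ :=
  Real.exp (-(t / ε ^ 2)) * m0 + ε⁻¹ * β t ω
    - (ε ^ 3)⁻¹ * ∫ s in (0:ℝ)..t, Real.exp (-((t - s) / ε ^ 2)) * β s ω

/-- `ζ^ε(t) = ε⁻¹ ∫₀ᵗ m^ε(s) ds`. -/
noncomputable def zetaOU {Ω : Type*} (β : ℝ → Ω → ℝ) (ε m0 t : ℝ) (ω : Ω) : ℝ :=
  ε⁻¹ * ∫ s in (0:ℝ)..t, mOU β ε m0 s ω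

open scoped Topology

section ExponentialMoments

variable {Ω : Type*} [MeasurableSpace Ω] {μ : Measure Ω}

lemma exp_add_le_exp_two_mul_add_exp_two_mul (a b : ℝ) :
    exp (a + b) ≤ exp (2 * a) + exp (2 * b) := by
  rcases le_total a b with h | h
  · exact (exp_le_exp.2 (by linarith)).trans (le_add_of_nonneg_left (exp_pos _).le)
  · exact (exp_le_exp.2 (by linarith)).trans (le_add_of_nonneg_right (exp_pos _).le)

lemma integrable_exp_mul_add {f g : Ω → ℝ} (hf : ∀ c, Integrable (fun ω => exp (c * f ω)) μ)
    (hg : ∀ c, Integrable (fun ω => exp (c * g ω)) μ) (c : ℝ) :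
    Integrable (fun ω => exp (c * (f ω + g ω))) μ := by
  refine ((hf (2 * c)).add (hg (2 * c))).mono' ?_ (ae_of_all _ fun ω => ?_)
  · simpa only [mul_add, exp_add] using (hf c).1.fun_mul (hg c).1
  · rw [norm_of_nonneg (exp_pos _).le, mul_add, Pi.add_apply, mul_assoc, mul_assoc]
    exact exp_add_le_exp_two_mul_add_exp_two_mul (c * f ω) (c * g ω)

lemma integrable_exp_mul_sum [IsFiniteMeasure μ] {ι : Type*} {s : Finset ι} {f : ι → Ω → ℝ}
    (hf : ∀ i ∈ s, ∀ c, Integrable (fun ω => exp (c * f i ω)) μ) (c : ℝ) :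
    Integrable (fun ω => exp (c * ∑ i ∈ s, f i ω)) μ := by
  classical
  induction s using Finset.induction_on generalizing c with
  | empty => simp
  | insert i s hi ih =>
    simp only [Finset.sum_insert hi]
    exact integrable_exp_mul_add (hf i (s.mem_insert_self i))
      (ih fun j hj => hf j (Finset.mem_insert_of_mem hj)) c

lemma integrable_exp_mul_abs_of_map_eq_gaussianReal [NeZero μ] {X : Ω → ℝ} {m : ℝ} {v : NNReal}
    (hX : μ.map X = gaussianReal m v) (c : ℝ) :
    Integrable (fun ω => exp (c * |X ω|)) μ := by
  have hexp (t : ℝ) : Integrable (fun ω => exp (t * X ω)) μ := by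
    rw [← mgf_pos_iff, mgf_gaussianReal hX]
    exact exp_pos _
  exact integrable_exp_mul_abs (hexp c) (hexp (-c))

end ExponentialMoments

lemma tendsto_integral_norm_sub_rpow_of_dominated {Ω E ι : Type*} [MeasurableSpace Ω]
    {μ : Measure Ω} [NormedAddCommGroup E] {l : Filter ι} [l.IsCountablyGenerated]
    {F : ι → Ω → E} {f : Ω → E} {g : Ω → ℝ} {p : ℝ} (hp : 0 < p)
    (hF : ∀ᶠ i in l, AEStronglyMeasurable (F i) μ) (hf : AEStronglyMeasurable f μ)
    (hle : ∀ᶠ i in l, ∀ ω, ‖F i ω - f ω‖ ≤ g ω) (hg : Integrable (fun ω => g ω ^ p) μ)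
    (hlim : ∀ ω, Tendsto (fun i => F i ω) l (𝓝 (f ω))) :
    Tendsto (fun i => (∫ ω, ‖F i ω - f ω‖ ^ p ∂μ) ^ (1 / p)) l (𝓝 0) := by
  have hint : Tendsto (fun i => ∫ ω, ‖F i ω - f ω‖ ^ p ∂μ) l (𝓝 0) := by
    have h := tendsto_integral_filter_of_dominated_convergence (μ := μ) (f := fun _ => (0 : ℝ))
      _ (hF.mono fun i hi => ((hi.sub hf).norm.aemeasurable.pow_const p).aestronglyMeasurable)
      (hle.mono fun i hi => ae_of_all _ fun ω => ?_) hg (ae_of_all _ fun ω => ?_)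
    · simpa using h
    · rw [norm_of_nonneg (by positivity)]
      exact rpow_le_rpow (norm_nonneg _) (hi ω) hp.le
    · simpa [zero_rpow hp.ne'] using
        ((hlim ω).sub_const (f ω)).norm.rpow_const (Or.inr hp.le)
  have hp' : 0 < 1 / p := one_div_pos.2 hp
  simpa only [zero_rpow hp'.ne'] using hint.rpow_const (Or.inr hp'.le)

lemma le_exp_of_le_mul_exp {C R : ℝ} (hC : 0 ≤ C) (hR : 0 ≤ R) {D : ℕ → ℝ} (h0 : D 0 ≤ 1)
    (n : ℕ) (hD : ∀ k < n, D (k + 1) ≤ C * (2 * R + D k) * exp (C * (2 * R))) :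
    D n ≤ exp (3 * n * (1 + C) * (1 + R)) := by
  induction n with
  | zero => simpa using h0
  | succ k ih =>
    set b := 3 * k * (1 + C)
    have hb : 0 ≤ b := by positivity
    have hDk := ih fun j hj => hD j (hj.trans k.lt_succ_self)
    have h1 : 1 ≤ exp (b * (1 + R)) := one_le_exp (by positivity)
    have h2 : 2 * R + D k ≤ 3 * exp R * exp (b * (1 + R)) := by
      nlinarith [add_one_le_exp R, exp_pos R]
    have h3 : (3 : ℝ) ≤ exp 2 := by linarith [add_one_le_exp 2]
    calc D (k + 1) ≤ C * (2 * R + D k) * exp (C * (2 * R)) := hD k k.lt_succ_self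
      _ ≤ C * (3 * exp R * exp (b * (1 + R))) * exp (C * (2 * R)) := by gcongr
      _ ≤ exp C * (exp 2 * exp R * exp (b * (1 + R))) * exp (C * (2 * R)) := by
        gcongr
        linarith [add_one_le_exp C]
      _ = exp (C + 2 + R + b * (1 + R) + C * (2 * R)) := by simp only [exp_add]; ring
      _ ≤ exp (3 * ↑(k + 1) * (1 + C) * (1 + R)) := by
        gcongr
        push_cast
        nlinarith [mul_nonneg hC hR]

lemma tendsto_of_forall_succ_eq {ι α β : Type*} [TopologicalSpace α] [TopologicalSpace β]
    {Φ : α → β → β} (hΦ : Continuous (Function.uncurry Φ)) {l : Filter ι}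
    {τ : ι → ℕ → α} {τ' : ℕ → α} {x : ι → ℕ → β} {x' : ℕ → β}
    (hx : ∀ᶠ i in l, ∀ k, x i (k + 1) = Φ (τ i k) (x i k)) (hx' : ∀ k, x' (k + 1) = Φ (τ' k) (x' k))
    (hτ : ∀ k, Tendsto (fun i => τ i k) l (𝓝 (τ' k)))
    (h0 : Tendsto (fun i => x i 0) l (𝓝 (x' 0))) (k : ℕ) :
    Tendsto (fun i => x i k) l (𝓝 (x' k)) := by
  induction k with
  | zero => exact h0
  | succ k ih =>
    rw [hx' k]
    exact ((hΦ.tendsto _).comp ((hτ k).prodMk_nhds ih)).congr'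
      (hx.mono fun i hi => (hi k).symm)

lemma measurable_of_forall_succ_eq {Ω α β : Type*} [MeasurableSpace Ω] [MeasurableSpace α]
    [MeasurableSpace β] {Φ : α → β → β} (hΦ : Measurable (Function.uncurry Φ))
    {τ : ℕ → Ω → α} {x : ℕ → Ω → β} (hx : ∀ k ω, x (k + 1) ω = Φ (τ k ω) (x k ω))
    (hτ : ∀ k, Measurable (τ k)) (h0 : Measurable (x 0)) (k : ℕ) : Measurable (x k) := by
  induction k with
  | zero => exact h0
  | succ k ih =>
    rw [funext (hx k)]
    exact hΦ.comp ((hτ k).prodMk ih)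

/-- Implicit Euler step for `dm = -ε⁻² m dt + ε⁻¹ dβ`, with increments `y k` of the noise. -/
def IsDiscreteOU (Δt ε : ℝ) (y m : ℕ → ℝ) : Prop :=
  ∀ k, m (k + 1) = (m k + y k / ε) / (1 + Δt / ε ^ 2)

namespace IsDiscreteOU

variable {Δt ε : ℝ} {y m : ℕ → ℝ}

lemma mul_succ (hm : IsDiscreteOU Δt ε y m) (hε : 0 < ε) (hΔt : 0 ≤ Δt) (k : ℕ) :
    ε * m (k + 1) = (ε * m k + y k) * (ε ^ 2 / (ε ^ 2 + Δt)) := by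
  have : ε ^ 2 + Δt ≠ 0 := by positivity
  rw [hm k]
  field_simp

lemma mul_succ_div (hm : IsDiscreteOU Δt ε y m) (hε : 0 < ε) (hΔt : 0 ≤ Δt) (k : ℕ) :
    Δt * m (k + 1) / ε = (ε * m k + y k) * (Δt / (ε ^ 2 + Δt)) := by
  have : ε ^ 2 + Δt ≠ 0 := by positivity
  rw [hm k]
  field_simp

lemma abs_mul_succ_le (hm : IsDiscreteOU Δt ε y m) (hε : 0 < ε) (hΔt : 0 ≤ Δt) (k : ℕ) :
    |ε * m (k + 1)| ≤ ε * |m k| + |y k| := by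
  rw [hm.mul_succ hε hΔt, abs_mul, abs_of_nonneg (by positivity : 0 ≤ ε ^ 2 / (ε ^ 2 + Δt))]
  calc |ε * m k + y k| * (ε ^ 2 / (ε ^ 2 + Δt)) ≤ |ε * m k + y k| :=
        mul_le_of_le_one_right (abs_nonneg _) (div_le_one_of_le₀ (by linarith) (by positivity))
    _ ≤ ε * |m k| + |y k| := by simpa [abs_mul, abs_of_pos hε] using abs_add_le (ε * m k) (y k)

lemma abs_mul_succ_div_le (hm : IsDiscreteOU Δt ε y m) (hε : 0 < ε) (hΔt : 0 ≤ Δt) (k : ℕ) :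
    |Δt * m (k + 1) / ε| ≤ ε * |m k| + |y k| := by
  rw [hm.mul_succ_div hε hΔt, abs_mul, abs_of_nonneg (by positivity : 0 ≤ Δt / (ε ^ 2 + Δt))]
  calc |ε * m k + y k| * (Δt / (ε ^ 2 + Δt)) ≤ |ε * m k + y k| :=
        mul_le_of_le_one_right (abs_nonneg _) (div_le_one_of_le₀ (by nlinarith) (by positivity))
    _ ≤ ε * |m k| + |y k| := by simpa [abs_mul, abs_of_pos hε] using abs_add_le (ε * m k) (y k)

lemma mul_abs_le_sum (hm : IsDiscreteOU Δt ε y m) (hε : 0 < ε) (hΔt : 0 ≤ Δt) (k : ℕ) :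
    ε * |m k| ≤ ε * |m 0| + ∑ j ∈ Finset.range k, |y j| := by
  induction k with
  | zero => simp
  | succ k ih =>
    calc ε * |m (k + 1)| = |ε * m (k + 1)| := by rw [abs_mul, abs_of_pos hε]
      _ ≤ ε * |m k| + |y k| := hm.abs_mul_succ_le hε hΔt k
      _ ≤ ε * |m 0| + ∑ j ∈ Finset.range (k + 1), |y j| := by
        rw [Finset.sum_range_succ]; linarith

lemma abs_mul_succ_div_le_sum (hm : IsDiscreteOU Δt ε y m) (hε : 0 < ε) (hΔt : 0 ≤ Δt) (k : ℕ) :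
    |Δt * m (k + 1) / ε| ≤ ε * |m 0| + ∑ j ∈ Finset.range (k + 1), |y j| := by
  rw [Finset.sum_range_succ]
  linarith [hm.abs_mul_succ_div_le hε hΔt k, hm.mul_abs_le_sum hε hΔt k]

end IsDiscreteOU

lemma measurable_of_isDiscreteOU {Ω : Type*} [MeasurableSpace Ω] {Δt ε : ℝ} {y m : ℕ → Ω → ℝ}
    (hm : ∀ ω, IsDiscreteOU Δt ε (y · ω) (m · ω)) (hy : ∀ k, Measurable (y k))
    (h0 : Measurable (m 0)) (k : ℕ) : Measurable (m k) :=
  measurable_of_forall_succ_eq (Φ := fun a b => (b + a / ε) / (1 + Δt / ε ^ 2)) (by fun_prop)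
    (fun k ω => hm ω k) hy h0 k

lemma tendsto_mul_succ_div_of_isDiscreteOU {l : Filter ℝ} (hl : l ≤ 𝓝[>] 0) {Δt : ℝ} (hΔt : 0 < Δt)
    {y : ℕ → ℝ} {m : ℝ → ℕ → ℝ} (hm : ∀ᶠ ε in l, IsDiscreteOU Δt ε y (m ε)) {M : ℝ}
    (h0 : ∀ᶠ ε in l, |m ε 0| ≤ M) (k : ℕ) :
    Tendsto (fun ε => Δt * m ε (k + 1) / ε) l (𝓝 (y k)) := by
  have hpos : ∀ᶠ ε in l, 0 < ε := hl self_mem_nhdsWithin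
  have hid : Tendsto (fun ε : ℝ => ε) l (𝓝 0) := tendsto_id.mono_left (hl.trans nhdsWithin_le_nhds)
  have hsq : Tendsto (fun ε : ℝ => ε ^ 2) l (𝓝 0) := by simpa using hid.pow 2
  have hden : Tendsto (fun ε : ℝ => ε ^ 2 + Δt) l (𝓝 Δt) := by simpa using hsq.add_const Δt
  have hmul : ∀ j, Tendsto (fun ε => ε * m ε j) l (𝓝 0) := by
    intro j
    induction j with
    | zero => exact hid.zero_mul_isBoundedUnder_le (isBoundedUnder_of_eventually_le h0)
    | succ j ih =>
      have h := (ih.add_const (y j)).mul (hsq.div hden hΔt.ne')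
      rw [zero_div, mul_zero] at h
      exact h.congr' ((hm.and hpos).mono fun ε ⟨hmε, hε⟩ => (hmε.mul_succ hε hΔt.le j).symm)
  have h := ((hmul k).add_const (y k)).mul ((tendsto_const_nhds (x := Δt)).div hden hΔt.ne')
  rw [zero_add, div_self hΔt.ne', mul_one] at h
  exact h.congr' ((hm.and hpos).mono fun ε ⟨hmε, hε⟩ => (hmε.mul_succ_div hε hΔt.le k).symm)

lemma norm_sub_le_exp_of_isDiscreteOU {E : Type*} [NormedAddCommGroup E] {Φ : ℝ → E → E} {C : ℝ}
    (hC : 0 ≤ C) (hΦ : ∀ (t₁ t₂ : ℝ) (x₁ x₂ : E),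
      ‖Φ t₂ x₂ - Φ t₁ x₁‖ ≤ C * (|t₂ - t₁| + ‖x₂ - x₁‖) * exp (C * (|t₁| + |t₂|)))
    {Δt ε : ℝ} (hε : 0 < ε) (hΔt : 0 ≤ Δt) {y m : ℕ → ℝ} (hm : IsDiscreteOU Δt ε y m)
    {x x' : ℕ → E} (hx : ∀ k, x (k + 1) = Φ (Δt * m (k + 1) / ε) (x k))
    (hx' : ∀ k, x' (k + 1) = Φ (y k) (x' k)) (h0 : ‖x 0 - x' 0‖ ≤ 1) {M : ℝ}
    (hM : ε * |m 0| ≤ M) (n : ℕ) :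
    ‖x n - x' n‖ ≤ exp (3 * n * (1 + C) * (1 + (M + ∑ k ∈ Finset.range n, |y k|))) := by
  set R := M + ∑ k ∈ Finset.range n, |y k|
  have hM0 : 0 ≤ M := (mul_nonneg hε.le (abs_nonneg (m 0))).trans hM
  have hR : 0 ≤ R := by positivity
  refine le_exp_of_le_mul_exp (D := fun k => ‖x k - x' k‖) hC hR h0 n fun k hk => ?_
  have hsum : ∑ j ∈ Finset.range (k + 1), |y j| ≤ ∑ j ∈ Finset.range n, |y j| :=
    Finset.sum_le_sum_of_subset_of_nonneg (Finset.range_subset_range.2 hk) fun _ _ _ => abs_nonneg _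
  have hτ : |Δt * m (k + 1) / ε| ≤ R := (hm.abs_mul_succ_div_le_sum hε hΔt k).trans (by linarith)
  have hy : |y k| ≤ R := by
    have := Finset.single_le_sum (fun j _ => abs_nonneg (y j)) (Finset.mem_range.2 hk)
    linarith
  rw [hx, hx']
  calc ‖Φ (Δt * m (k + 1) / ε) (x k) - Φ (y k) (x' k)‖
      ≤ C * (|Δt * m (k + 1) / ε - y k| + ‖x k - x' k‖)
          * exp (C * (|y k| + |Δt * m (k + 1) / ε|)) :=
        hΦ _ _ _ _
    _ ≤ C * (2 * R + ‖x k - x' k‖) * exp (C * (2 * R)) := by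
        gcongr
        · linarith [abs_sub (Δt * m (k + 1) / ε) (y k)]
        · linarith

theorem scheme_converges_to_limiting_scheme_general
    {d : ℕ} {Ω : Type*} [MeasurableSpace Ω] (P : Measure Ω) [IsProbabilityMeasure P]
    (Φ : ℝ → EuclideanSpace ℝ (Fin d) → EuclideanSpace ℝ (Fin d))
    (hΦreg : ContDiff ℝ 3 (fun q : ℝ × EuclideanSpace ℝ (Fin d) => Φ q.1 q.2))
    (C : ℝ) (hCpos : 0 < C)
    (hΦlip : ∀ (t₁ t₂ : ℝ) (x₁ x₂ : EuclideanSpace ℝ (Fin d)),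
      ‖Φ t₂ x₂ - Φ t₁ x₁‖ ≤ C * (|t₂ - t₁| + ‖x₂ - x₁‖) * Real.exp (C * (|t₁| + |t₂|)))
    (β : ℝ → Ω → ℝ)
    (hβmeas : ∀ t, Measurable (β t))
    (hβgauss : ∀ s t : ℝ, 0 ≤ s → s ≤ t →
      Measure.map (fun ω => β t ω - β s ω) P = gaussianReal 0 (Real.toNNReal (t - s)))
    (ε₀ : ℝ)
    (m0 : ℝ → ℝ) (M0 : ℝ) (hm0 : ∀ ε ∈ Ioo (0:ℝ) ε₀, |m0 ε| ≤ M0)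
    (x0 : ℝ → EuclideanSpace ℝ (Fin d)) (x00 : EuclideanSpace ℝ (Fin d))
    (hx0 : Tendsto x0 (nhdsWithin 0 (Ioo (0:ℝ) ε₀)) (nhds x00))
    (T : ℝ) (hT : 0 < T) (N : ℕ) (hN : 1 ≤ N)
    -- the scheme, for each value of `ε`
    (mD : ℝ → ℕ → Ω → ℝ) (XD : ℝ → ℕ → Ω → EuclideanSpace ℝ (Fin d))
    (hmD0 : ∀ ε ∈ Ioo (0:ℝ) ε₀, ∀ ω, mD ε 0 ω = m0 ε)
    (hmD : ∀ ε ∈ Ioo (0:ℝ) ε₀, ∀ (n : ℕ) ω, mD ε (n + 1) ω =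
      (mD ε n ω + (β (((n : ℝ) + 1) * (T / N)) ω - β ((n : ℝ) * (T / N)) ω) / ε)
        / (1 + (T / N) / ε ^ 2))
    (hXD0 : ∀ ε ∈ Ioo (0:ℝ) ε₀, ∀ ω, XD ε 0 ω = x0 ε)
    (hXD : ∀ ε ∈ Ioo (0:ℝ) ε₀, ∀ (n : ℕ) ω,
      XD ε (n + 1) ω = Φ ((T / N) * mD ε (n + 1) ω / ε) (XD ε n ω))
    -- the limiting scheme
    (XD0 : ℕ → Ω → EuclideanSpace ℝ (Fin d))
    (hXD00 : ∀ ω, XD0 0 ω = x00)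
    (hXD0rec : ∀ (n : ℕ) ω, XD0 (n + 1) ω =
      Φ (β (((n : ℝ) + 1) * (T / N)) ω - β ((n : ℝ) * (T / N)) ω) (XD0 n ω))
    (p : ℝ) (hp : 1 ≤ p) (n : ℕ) :
    Tendsto (fun ε : ℝ => (∫ ω, ‖XD ε n ω - XD0 n ω‖ ^ p ∂P) ^ (1 / p))
      (nhdsWithin 0 (Ioo (0:ℝ) ε₀)) (nhds 0) := by
  set l := nhdsWithin (0 : ℝ) (Ioo 0 ε₀)
  have hl : l ≤ 𝓝[>] 0 := nhdsWithin_mono _ Ioo_subset_Ioi_self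
  have hmem : ∀ᶠ ε in l, ε ∈ Ioo (0 : ℝ) ε₀ := self_mem_nhdsWithin
  have hΔt : 0 < T / N := div_pos hT (by exact_mod_cast hN)
  set Δβ : ℕ → Ω → ℝ := fun k ω => β (((k : ℝ) + 1) * (T / N)) ω - β ((k : ℝ) * (T / N)) ω
  have hΔβ (k : ℕ) : Measurable (Δβ k) := (hβmeas _).sub (hβmeas _)
  have hOU (ε) (hε : ε ∈ Ioo (0 : ℝ) ε₀) (ω) : IsDiscreteOU (T / N) ε (Δβ · ω) (mD ε · ω) :=
    fun k => hmD ε hε k ω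
  have hexp : ∀ c, Integrable (fun ω => exp (c * ∑ k ∈ Finset.range n, |Δβ k ω|)) P :=
    integrable_exp_mul_sum fun k _ => integrable_exp_mul_abs_of_map_eq_gaussianReal
      (hβgauss _ _ (by positivity) (by gcongr; linarith))
  set b := 3 * n * (1 + C)
  refine tendsto_integral_norm_sub_rpow_of_dominated (by linarith)
    (g := fun ω => exp (b * (1 + (ε₀ * M0 + ∑ k ∈ Finset.range n, |Δβ k ω|)))) ?_ ?_ ?_ ?_ ?_
  · filter_upwards [hmem] with ε hε
    have hmD : ∀ k, Measurable (mD ε k) := measurable_of_isDiscreteOU (hOU ε hε) hΔβ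
      (funext (hmD0 ε hε) ▸ measurable_const)
    exact (measurable_of_forall_succ_eq hΦreg.continuous.measurable (hXD ε hε)
      (fun k => ((hmD (k + 1)).const_mul _).div_const _)
      (funext (hXD0 ε hε) ▸ measurable_const) n).aestronglyMeasurable
  · exact (measurable_of_forall_succ_eq hΦreg.continuous.measurable hXD0rec hΔβ
      (funext hXD00 ▸ measurable_const) n).aestronglyMeasurable
  · filter_upwards [hmem, hx0.eventually (Metric.closedBall_mem_nhds x00 one_pos)] with ε hε hx ω
    refine norm_sub_le_exp_of_isDiscreteOU (x := (XD ε · ω)) (x' := (XD0 · ω)) hCpos.le hΦlip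
      hε.1 hΔt.le (hOU ε hε ω) (fun k => hXD ε hε k ω) (fun k => hXD0rec k ω)
      (by rw [hXD0 ε hε, hXD00, ← dist_eq_norm]; exact hx) ?_ n
    rw [hmD0 ε hε ω]
    exact mul_le_mul hε.2.le (hm0 ε hε) (abs_nonneg _) (hε.1.trans hε.2).le
  · refine (integrable_exp_mul_add (f := fun _ => 1 + ε₀ * M0)
      (fun c => integrable_const _) hexp (b * p)).congr (ae_of_all _ fun ω => ?_)
    simp only [← exp_mul]; ring_nf
  · intro ω
    refine tendsto_of_forall_succ_eq (x := fun ε k => XD ε k ω) (x' := (XD0 · ω))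
      (τ' := (Δβ · ω)) hΦreg.continuous (hmem.mono fun ε hε k => hXD ε hε k ω) (hXD0rec · ω)
      (tendsto_mul_succ_div_of_isDiscreteOU hl hΔt (hmem.mono fun ε hε => hOU ε hε ω)
        (hmem.mono fun ε hε => (hmD0 ε hε ω).symm ▸ hm0 ε hε)) ?_ n
    rw [hXD00]
    exact hx0.congr' (hmem.mono fun ε hε => (hXD0 ε hε ω).symm)

/-- **Proposition (convergence of the scheme to the limiting scheme).** For every `p ∈ [1,∞)`,
`T ∈ (0,∞)`, `N ≥ 1` (with `Δt = T/N`) and every `n ∈ {0,…,N}`, one has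
`(𝔼[‖X_n^{ε,Δt} − X_n^{0,Δt}‖^p])^{1/p} → 0` as `ε → 0`. -/
theorem scheme_converges_to_limiting_scheme
    {d : ℕ} {Ω : Type*} [MeasurableSpace Ω] (P : Measure Ω) [IsProbabilityMeasure P]
    (σ : EuclideanSpace ℝ (Fin d) → EuclideanSpace ℝ (Fin d))
    (hσ : ContDiff ℝ 3 σ) (Cσ : ℝ)
    (hσbd : ∀ k : ℕ, k ≤ 3 → ∀ x, ‖iteratedFDeriv ℝ k σ x‖ ≤ Cσ)
    (φ : ℝ → EuclideanSpace ℝ (Fin d) → EuclideanSpace ℝ (Fin d))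
    (hφ0 : ∀ x, φ 0 x = x)
    (hφd : ∀ (t : ℝ) (x : EuclideanSpace ℝ (Fin d)),
      HasDerivAt (fun s => φ s x) (σ (φ t x)) t)
    (Φ : ℝ → EuclideanSpace ℝ (Fin d) → EuclideanSpace ℝ (Fin d))
    (hΦreg : ContDiff ℝ 3 (fun q : ℝ × EuclideanSpace ℝ (Fin d) => Φ q.1 q.2))
    (C : ℝ) (hCpos : 0 < C)
    (hΦord : ∀ (t : ℝ) x, ‖Φ t x - φ t x‖ ≤ C * |t| ^ 3 * Real.exp (C * |t|))
    (hΦlip : ∀ (t₁ t₂ : ℝ) (x₁ x₂ : EuclideanSpace ℝ (Fin d)),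
      ‖Φ t₂ x₂ - Φ t₁ x₁‖ ≤ C * (|t₂ - t₁| + ‖x₂ - x₁‖) * Real.exp (C * (|t₁| + |t₂|)))
    (hΦder : ∀ k : ℕ, k ≤ 3 → ∀ (t : ℝ) (x : EuclideanSpace ℝ (Fin d)),
      ‖iteratedFDeriv ℝ k (fun q : ℝ × EuclideanSpace ℝ (Fin d) => Φ q.1 q.2) (t, x)‖
        ≤ C * Real.exp (C * |t|))
    (β : ℝ → Ω → ℝ)
    (hβmeas : ∀ t, Measurable (β t))
    (hβ0 : ∀ ω, β 0 ω = 0)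
    (hβcont : ∀ᵐ ω ∂P, Continuous fun t => β t ω)
    (hβgauss : ∀ s t : ℝ, 0 ≤ s → s ≤ t →
      Measure.map (fun ω => β t ω - β s ω) P = gaussianReal 0 (Real.toNNReal (t - s)))
    (hβindep : ∀ (n : ℕ) (u : ℕ → ℝ), Monotone u → 0 ≤ u 0 →
      iIndepFun
        (fun (i : Fin n) (ω : Ω) => β (u (i.1 + 1)) ω - β (u i.1) ω) P)
    (ε₀ : ℝ) (hε₀ : 0 < ε₀)
    (m0 : ℝ → ℝ) (M0 : ℝ) (hm0 : ∀ ε ∈ Ioo (0:ℝ) ε₀, |m0 ε| ≤ M0)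
    (x0 : ℝ → EuclideanSpace ℝ (Fin d)) (x00 : EuclideanSpace ℝ (Fin d))
    (hx0 : Tendsto x0 (nhdsWithin 0 (Ioo (0:ℝ) ε₀)) (nhds x00))
    (T : ℝ) (hT : 0 < T) (N : ℕ) (hN : 1 ≤ N)
    -- the scheme, for each value of `ε`
    (mD : ℝ → ℕ → Ω → ℝ) (XD : ℝ → ℕ → Ω → EuclideanSpace ℝ (Fin d))
    (hmD0 : ∀ ε ∈ Ioo (0:ℝ) ε₀, ∀ ω, mD ε 0 ω = m0 ε)
    (hmD : ∀ ε ∈ Ioo (0:ℝ) ε₀, ∀ (n : ℕ) ω, mD ε (n + 1) ω =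
      (mD ε n ω + (β (((n : ℝ) + 1) * (T / N)) ω - β ((n : ℝ) * (T / N)) ω) / ε)
        / (1 + (T / N) / ε ^ 2))
    (hXD0 : ∀ ε ∈ Ioo (0:ℝ) ε₀, ∀ ω, XD ε 0 ω = x0 ε)
    (hXD : ∀ ε ∈ Ioo (0:ℝ) ε₀, ∀ (n : ℕ) ω,
      XD ε (n + 1) ω = Φ ((T / N) * mD ε (n + 1) ω / ε) (XD ε n ω))
    -- the limiting scheme
    (XD0 : ℕ → Ω → EuclideanSpace ℝ (Fin d))
    (hXD00 : ∀ ω, XD0 0 ω = x00)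
    (hXD0rec : ∀ (n : ℕ) ω, XD0 (n + 1) ω =
      Φ (β (((n : ℝ) + 1) * (T / N)) ω - β ((n : ℝ) * (T / N)) ω) (XD0 n ω))
    (p : ℝ) (hp : 1 ≤ p) (n : ℕ) (hn : n ≤ N) :
    Tendsto (fun ε : ℝ => (∫ ω, ‖XD ε n ω - XD0 n ω‖ ^ p ∂P) ^ (1 / p))
      (nhdsWithin 0 (Ioo (0:ℝ) ε₀)) (nhds 0) :=
  scheme_converges_to_limiting_scheme_general P Φ hΦreg C hCpos hΦlip β hβmeas hβgauss ε₀ m0 M0 hm0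
    x0 x00 hx0 T hT N hN mD XD hmD0 hmD hXD0 hXD XD0 hXD00 hXD0rec p hp n
end

section
/- For every T ∈ (0,∞) and every q ∈ (0,∞) one has the uniform exponential moment bounds sup_{ε∈(0,ε₀)} sup_{0≤t≤T} 𝔼[e^{q|ζ^ε(t)|}] < ∞ and sup_{0≤t≤T} 𝔼[e^{q|β(t)|}] < ∞. -/
open MeasureTheory ProbabilityTheory Real Set Filter

/-!
Since `-ε² m₀ e^{-s/ε²} + ε⁻¹ ∫₀ˢ e^{-(s-u)/ε²} β(u) du` is an antiderivative of `m^ε`,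
`ζ^ε(t) = ε m₀ (1 - e^{-t/ε²}) + ε⁻² ∫₀ᵗ e^{-(t-u)/ε²} β(u) du`, and the kernel
`ε⁻² e^{-(t-u)/ε²}` has mass `1 - e^{-t/ε²} ≤ 1` on `[0, t]`. So `|ζ^ε(t)| ≤ ε₀ M₀ + ∫ |β| dν`
for the probability measure `ν` on `(0, t]` with density proportional to that kernel, and
Jensen's inequality for `exp` followed by Tonelli gives
`𝔼 e^{q|ζ^ε(t)|} ≤ e^{q ε₀ M₀} sup_{u ≤ t} 𝔼 e^{q|β(u)|}`. Finally `β(u) ~ N(0, u)` and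
`e^{q|x|} ≤ e^{qx} + e^{-qx}` bound `𝔼 e^{q|β(u)|}` by `2 e^{u q²/2}`.
-/

open scoped NNReal

noncomputable def expConv (c : ℝ) (b : ℝ → ℝ) (t : ℝ) : ℝ :=
  ∫ s in (0:ℝ)..t, exp (-((t - s) / c)) * b s

lemma expConv_eq_exp_mul (c : ℝ) (b : ℝ → ℝ) (t : ℝ) :
    expConv c b t = exp (-(t / c)) * ∫ s in (0:ℝ)..t, exp (s / c) * b s := by
  rw [expConv, ← intervalIntegral.integral_const_mul]
  congr 1 with s
  rw [← mul_assoc, ← exp_add]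
  ring_nf

lemma hasDerivAt_expConv (c : ℝ) {b : ℝ → ℝ} (hb : Continuous b) (t : ℝ) :
    HasDerivAt (expConv c b) (b t - expConv c b t / c) t := by
  have hint : Continuous fun s => exp (s / c) * b s := by fun_prop
  have hG := intervalIntegral.integral_hasDerivAt_right (hint.intervalIntegrable 0 t)
    hint.stronglyMeasurable.stronglyMeasurableAtFilter hint.continuousAt
  have hE : HasDerivAt (fun s => exp (-(s / c))) (exp (-(t / c)) * -(1 / c)) t :=
    ((hasDerivAt_id' t).div_const c).fun_neg.exp
  rw [funext (expConv_eq_exp_mul c b)]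
  refine (hE.mul hG).congr_deriv ?_
  dsimp only
  rw [← mul_assoc, ← exp_add, neg_add_cancel, exp_zero]
  ring

lemma continuous_expConv (c : ℝ) {b : ℝ → ℝ} (hb : Continuous b) :
    Continuous (expConv c b) :=
  continuous_iff_continuousAt.2 fun t => (hasDerivAt_expConv c hb t).continuousAt

lemma integral_exp_neg_sub_div {c : ℝ} (hc : c ≠ 0) (t : ℝ) :
    ∫ s in (0:ℝ)..t, exp (-((t - s) / c)) = c * (1 - exp (-(t / c))) := by
  have h : ∀ s, HasDerivAt (fun s => c * exp (-((t - s) / c))) (exp (-((t - s) / c))) s := by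
    intro s
    refine ((((hasDerivAt_id' s).const_sub t).div_const c).fun_neg.exp.const_mul c).congr_deriv ?_
    field_simp
  rw [intervalIntegral.integral_eq_sub_of_hasDerivAt (fun s _ => h s)
    ((by fun_prop : Continuous fun s => exp (-((t - s) / c))).intervalIntegrable 0 t)]
  simp
  ring

lemma zetaOU_eq {Ω : Type*} {β : ℝ → Ω → ℝ} {ε : ℝ} (hε : ε ≠ 0) (m0 t : ℝ) {ω : Ω}
    (hβ : Continuous fun s => β s ω) :
    zetaOU β ε m0 t ω
      = ε * m0 * (1 - exp (-(t / ε ^ 2))) + expConv (ε ^ 2) (β · ω) t / ε ^ 2 := by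
  have hc : ε ^ 2 ≠ 0 := pow_ne_zero 2 hε
  have hF : ∀ s, HasDerivAt (fun s => -ε ^ 2 * m0 * exp (-(s / ε ^ 2))
      + ε⁻¹ * expConv (ε ^ 2) (β · ω) s) (mOU β ε m0 s ω) s := by
    intro s
    refine ((((hasDerivAt_id' s).div_const (ε ^ 2)).fun_neg.exp.const_mul (-ε ^ 2 * m0)).add
      ((hasDerivAt_expConv _ hβ s).const_mul ε⁻¹)).congr_deriv ?_
    change _ = exp (-(s / ε ^ 2)) * m0 + ε⁻¹ * β s ω - (ε ^ 3)⁻¹ * expConv (ε ^ 2) (β · ω) s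
    field_simp
    ring
  have hm : Continuous fun s => mOU β ε m0 s ω := by
    simp only [mOU]
    exact (by fun_prop : Continuous fun s => exp (-(s / ε ^ 2)) * m0 + ε⁻¹ * β s ω).sub
      (continuous_const.mul (continuous_expConv _ hβ))
  rw [zetaOU, intervalIntegral.integral_eq_sub_of_hasDerivAt (fun s _ => hF s)
    (hm.intervalIntegrable 0 t)]
  simp [expConv]
  field_simp
  ring

noncomputable def expWeight (c t : ℝ) : Measure ℝ :=
  (volume.restrict (Ioc 0 t)).withDensity
    fun u => ENNReal.ofReal (exp (-((t - u) / c)) / (c * (1 - exp (-(t / c)))))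

section expWeight

variable {c t : ℝ}

lemma one_sub_exp_neg_div_pos (hc : 0 < c) (ht : 0 < t) : 0 < 1 - exp (-(t / c)) := by
  have : exp (-(t / c)) < 1 := exp_lt_one_iff.2 (neg_lt_zero.2 (div_pos ht hc))
  linarith

lemma integral_expWeight (hc : 0 < c) (ht : 0 < t) (f : ℝ → ℝ) :
    ∫ u, f u ∂expWeight c t = expConv c f t / (c * (1 - exp (-(t / c)))) := by
  have hZ := one_sub_exp_neg_div_pos hc ht
  rw [expWeight, integral_withDensity_eq_integral_toReal_smul (by fun_prop)
    (ae_of_all _ fun _ => ENNReal.ofReal_lt_top), expConv, intervalIntegral.integral_of_le ht.le,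
    ← integral_div]
  refine setIntegral_congr_fun measurableSet_Ioc fun u _ => ?_
  rw [ENNReal.toReal_ofReal (by positivity), smul_eq_mul]
  ring

lemma isProbabilityMeasure_expWeight (hc : 0 < c) (ht : 0 < t) :
    IsProbabilityMeasure (expWeight c t) := by
  have hZ := one_sub_exp_neg_div_pos hc ht
  have hρ : Continuous fun u => exp (-((t - u) / c)) / (c * (1 - exp (-(t / c)))) := by fun_prop
  constructor
  rw [expWeight, withDensity_apply _ MeasurableSet.univ, Measure.restrict_univ,
    ← ofReal_integral_eq_lintegral_ofReal hρ.integrableOn_Ioc (ae_of_all _ fun _ => by positivity),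
    ← intervalIntegral.integral_of_le ht.le, intervalIntegral.integral_div,
    integral_exp_neg_sub_div hc.ne', div_self (by positivity), ENNReal.ofReal_one]

lemma ae_mem_expWeight : ∀ᵐ u ∂expWeight c t, u ∈ Ioc 0 t :=
  (withDensity_absolutelyContinuous _ _).ae_le (ae_restrict_mem measurableSet_Ioc)

lemma integrable_expWeight (hc : 0 < c) (ht : 0 < t) {f : ℝ → ℝ} (hf : Continuous f) :
    Integrable f (expWeight c t) := by
  have := isProbabilityMeasure_expWeight hc ht
  rw [← Measure.restrict_eq_self_of_ae_mem (s := Icc 0 t)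
    (ae_mem_expWeight.mono fun _ h => Ioc_subset_Icc_self h)]
  exact hf.continuousOn.integrableOn_compact isCompact_Icc

end expWeight

lemma abs_zetaOU_le {Ω : Type*} {β : ℝ → Ω → ℝ} {ε : ℝ} (hε : 0 < ε) (m0 : ℝ) {t : ℝ}
    (ht : 0 < t) {ω : Ω} (hβ : Continuous fun s => β s ω) :
    |zetaOU β ε m0 t ω| ≤ ε * |m0| + ∫ u, |β u ω| ∂expWeight (ε ^ 2) t := by
  have hZ := one_sub_exp_neg_div_pos (pow_pos hε 2) ht
  have hZ1 : 1 - exp (-(t / ε ^ 2)) ≤ 1 := by linarith [exp_pos (-(t / ε ^ 2))]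
  have hconv : expConv (ε ^ 2) (β · ω) t / ε ^ 2
      = (1 - exp (-(t / ε ^ 2))) * ∫ u, β u ω ∂expWeight (ε ^ 2) t := by
    rw [integral_expWeight (pow_pos hε 2) ht]
    field_simp
  rw [zetaOU_eq hε.ne' m0 t hβ, hconv]
  refine (abs_add_le _ _).trans (add_le_add ?_ ?_)
  · rw [abs_mul, abs_mul, abs_of_pos hε, abs_of_pos hZ]
    exact mul_le_of_le_one_right (by positivity) hZ1
  · rw [abs_mul, abs_of_pos hZ]
    exact (mul_le_mul hZ1 abs_integral_le_integral_abs (abs_nonneg _) zero_le_one).trans_eq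
      (one_mul _)

lemma lintegral_exp_integral_le {S Ω : Type*} [MeasurableSpace S] [MeasurableSpace Ω]
    (ν : Measure S) [IsProbabilityMeasure ν] (P : Measure Ω) [SFinite P] {X : S → Ω → ℝ}
    (hX : Measurable (Function.uncurry X)) (hXi : ∀ ω, Integrable (X · ω) ν)
    (hXe : ∀ ω, Integrable (fun u => exp (X u ω)) ν) :
    ∫⁻ ω, ENNReal.ofReal (exp (∫ u, X u ω ∂ν)) ∂P
      ≤ ∫⁻ u, ∫⁻ ω, ENNReal.ofReal (exp (X u ω)) ∂P ∂ν := by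
  calc ∫⁻ ω, ENNReal.ofReal (exp (∫ u, X u ω ∂ν)) ∂P
      ≤ ∫⁻ ω, ∫⁻ u, ENNReal.ofReal (exp (X u ω)) ∂ν ∂P := by
        refine lintegral_mono fun ω => ?_
        rw [← ofReal_integral_eq_lintegral_ofReal (hXe ω) (ae_of_all _ fun _ => (exp_pos _).le)]
        exact ENNReal.ofReal_le_ofReal <| convexOn_exp.map_integral_le continuousOn_exp
          isClosed_univ (ae_of_all _ fun _ => mem_univ _) (hXi ω) (hXe ω)
    _ = ∫⁻ u, ∫⁻ ω, ENNReal.ofReal (exp (X u ω)) ∂P ∂ν :=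
        lintegral_lintegral_swap
          (measurable_exp.comp (hX.comp measurable_swap)).ennreal_ofReal.aemeasurable

lemma exists_continuous_modification {ι Ω : Type*} [TopologicalSpace ι] [MeasurableSpace Ω]
    {P : Measure Ω} {X : ι → Ω → ℝ} (hX : ∀ t, Measurable (X t))
    (hXc : ∀ᵐ ω ∂P, Continuous fun t => X t ω) :
    ∃ Y : ι → Ω → ℝ, (∀ t, Measurable (Y t)) ∧ (∀ ω, Continuous fun t => Y t ω) ∧
      ∀ᵐ ω ∂P, ∀ t, Y t ω = X t ω := by
  classical
  obtain ⟨N, hN, hNm, hN0⟩ := exists_measurable_superset_of_null hXc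
  refine ⟨fun t ω => if ω ∈ N then 0 else X t ω,
    fun t => Measurable.ite hNm measurable_const (hX t), fun ω => ?_, ?_⟩
  · by_cases hω : ω ∈ N
    · simpa [hω] using continuous_const
    · simpa [hω] using not_not.1 (mt (@hN ω) hω)
  · filter_upwards [measure_eq_zero_iff_ae_notMem.1 hN0] with ω hω t
    simp [hω]

lemma lintegral_exp_mul_abs_zetaOU_le {Ω : Type*} [MeasurableSpace Ω] {P : Measure Ω} [SFinite P]
    {β : ℝ → Ω → ℝ} (hβmeas : ∀ t, Measurable (β t))
    (hβcont : ∀ᵐ ω ∂P, Continuous fun t => β t ω) {q : ℝ} (hq : 0 ≤ q) {ε : ℝ} (hε : 0 < ε)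
    (m0 : ℝ) {t C : ℝ} (ht : 0 < t)
    (hC : ∀ u ∈ Ioc 0 t, ∫⁻ ω, ENNReal.ofReal (exp (q * |β u ω|)) ∂P ≤ ENNReal.ofReal C) :
    ∫⁻ ω, ENNReal.ofReal (exp (q * |zetaOU β ε m0 t ω|)) ∂P
      ≤ ENNReal.ofReal (exp (q * (ε * |m0|)) * C) := by
  obtain ⟨Y, hYm, hYc, hYβ⟩ := exists_continuous_modification hβmeas hβcont
  have hY : Measurable (Function.uncurry Y) :=
    (stronglyMeasurable_uncurry_of_continuous_of_stronglyMeasurable hYc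
      fun u => (hYm u).stronglyMeasurable).measurable
  set ν := expWeight (ε ^ 2) t
  have := isProbabilityMeasure_expWeight (pow_pos hε 2) ht
  have hpath : ∀ᵐ ω ∂P, ENNReal.ofReal (exp (q * |zetaOU β ε m0 t ω|))
      ≤ ENNReal.ofReal (exp (q * (ε * |m0|))) * ENNReal.ofReal (exp (∫ u, q * |Y u ω| ∂ν)) := by
    filter_upwards [hYβ] with ω hω
    have hζ : zetaOU β ε m0 t ω = zetaOU Y ε m0 t ω := by simp only [zetaOU, mOU, hω]
    rw [← ENNReal.ofReal_mul (exp_pos _).le, ← exp_add, hζ, integral_const_mul, ← mul_add]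
    gcongr
    exact abs_zetaOU_le hε m0 ht (hYc ω)
  have hmoment : ∀ᵐ u ∂ν, ∫⁻ ω, ENNReal.ofReal (exp (q * |Y u ω|)) ∂P ≤ ENNReal.ofReal C := by
    filter_upwards [ae_mem_expWeight] with u hu
    rw [lintegral_congr_ae (hYβ.mono fun ω h => by rw [h u])]
    exact hC u hu
  calc ∫⁻ ω, ENNReal.ofReal (exp (q * |zetaOU β ε m0 t ω|)) ∂P
      ≤ ∫⁻ ω, ENNReal.ofReal (exp (q * (ε * |m0|)))
          * ENNReal.ofReal (exp (∫ u, q * |Y u ω| ∂ν)) ∂P := lintegral_mono_ae hpath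
    _ = ENNReal.ofReal (exp (q * (ε * |m0|)))
          * ∫⁻ ω, ENNReal.ofReal (exp (∫ u, q * |Y u ω| ∂ν)) ∂P :=
        lintegral_const_mul' _ _ ENNReal.ofReal_ne_top
    _ ≤ ENNReal.ofReal (exp (q * (ε * |m0|)))
          * ∫⁻ u, ∫⁻ ω, ENNReal.ofReal (exp (q * |Y u ω|)) ∂P ∂ν := by
        gcongr
        exact lintegral_exp_integral_le ν P (X := fun u ω => q * |Y u ω|) (by fun_prop)
          (fun ω => integrable_expWeight (pow_pos hε 2) ht (by fun_prop))
          (fun ω => integrable_expWeight (pow_pos hε 2) ht (by fun_prop))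
    _ ≤ ENNReal.ofReal (exp (q * (ε * |m0|))) * ENNReal.ofReal C := by
        gcongr
        exact (lintegral_mono_ae hmoment).trans (by simp)
    _ = ENNReal.ofReal (exp (q * (ε * |m0|)) * C) := (ENNReal.ofReal_mul (exp_pos _).le).symm

section Gaussian

variable {Ω : Type*} [MeasurableSpace Ω] {P : Measure Ω} {X : Ω → ℝ}

lemma integral_exp_mul_abs_le_mgf_add_mgf {t : ℝ}
    (hpos : Integrable (fun ω => exp (t * X ω)) P) (hneg : Integrable (fun ω => exp (-t * X ω)) P) :
    ∫ ω, exp (t * |X ω|) ∂P ≤ mgf X P t + mgf X P (-t) := by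
  rw [mgf, mgf, ← integral_add hpos hneg]
  refine integral_mono (integrable_exp_mul_abs hpos hneg) (hpos.add hneg) fun ω => ?_
  rcases abs_cases (X ω) with ⟨h, _⟩ | ⟨h, _⟩ <;> rw [h]
  · linarith [exp_pos (-t * X ω)]
  · rw [mul_neg, ← neg_mul]
    linarith [exp_pos (t * X ω)]

variable {v : ℝ≥0} (hX : P.map X = gaussianReal 0 v) (t : ℝ)
include hX

lemma integrable_exp_mul_of_map_eq_gaussianReal : Integrable (fun ω => exp (t * X ω)) P := by
  have : NeZero P := ⟨by rintro rfl; exact IsProbabilityMeasure.ne_zero _ (by simpa using hX.symm)⟩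
  rw [← mgf_pos_iff, mgf_gaussianReal hX]
  exact exp_pos _

lemma integral_exp_mul_abs_le_of_map_eq_gaussianReal :
    ∫ ω, exp (t * |X ω|) ∂P ≤ 2 * exp (v * t ^ 2 / 2) := by
  refine (integral_exp_mul_abs_le_mgf_add_mgf (integrable_exp_mul_of_map_eq_gaussianReal hX t)
    (integrable_exp_mul_of_map_eq_gaussianReal hX (-t))).trans_eq ?_
  rw [mgf_gaussianReal hX, mgf_gaussianReal hX]
  ring_nf

lemma lintegral_exp_mul_abs_le_of_map_eq_gaussianReal :
    ∫⁻ ω, ENNReal.ofReal (exp (t * |X ω|)) ∂P ≤ ENNReal.ofReal (2 * exp (v * t ^ 2 / 2)) := by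
  rw [← ofReal_integral_eq_lintegral_ofReal
    (integrable_exp_mul_abs (integrable_exp_mul_of_map_eq_gaussianReal hX t)
      (integrable_exp_mul_of_map_eq_gaussianReal hX (-t)))
    (ae_of_all _ fun _ => (exp_pos _).le)]
  exact ENNReal.ofReal_le_ofReal (integral_exp_mul_abs_le_of_map_eq_gaussianReal hX t)

end Gaussian

lemma integral_le_of_lintegral_ofReal_le {α : Type*} [MeasurableSpace α] {μ : Measure α}
    {f : α → ℝ} (hf : ∀ a, 0 ≤ f a) {C : ℝ} (hC : 0 ≤ C)
    (h : ∫⁻ a, ENNReal.ofReal (f a) ∂μ ≤ ENNReal.ofReal C) : ∫ a, f a ∂μ ≤ C :=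
  calc ∫ a, f a ∂μ ≤ ‖∫ a, f a ∂μ‖ := le_norm_self _
    _ ≤ (∫⁻ a, ENNReal.ofReal ‖f a‖ ∂μ).toReal := norm_integral_le_lintegral_norm f
    _ ≤ C := ENNReal.toReal_le_of_le_ofReal hC (by simpa only [Real.norm_of_nonneg (hf _)])

theorem zeta_beta_exponential_moments_general
    {Ω : Type*} [MeasurableSpace Ω] (P : Measure Ω) [IsProbabilityMeasure P]
    (β : ℝ → Ω → ℝ)
    (hβmeas : ∀ t, Measurable (β t))
    (hβ0 : ∀ ω, β 0 ω = 0)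
    (hβcont : ∀ᵐ ω ∂P, Continuous fun t => β t ω)
    (hβgauss : ∀ s t : ℝ, 0 ≤ s → s ≤ t →
      Measure.map (fun ω => β t ω - β s ω) P = gaussianReal 0 (Real.toNNReal (t - s)))
    (ε₀ : ℝ)
    (m0 : ℝ → ℝ) (M0 : ℝ) (hm0 : ∀ ε ∈ Ioo (0:ℝ) ε₀, |m0 ε| ≤ M0)
    (T : ℝ) (q : ℝ) (hq : 0 < q) :
    (∃ M : ℝ, ∀ ε ∈ Ioo (0:ℝ) ε₀, ∀ t ∈ Icc (0:ℝ) T,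
      ∫ ω, Real.exp (q * |zetaOU β ε (m0 ε) t ω|) ∂P ≤ M) ∧
    (∃ M : ℝ, ∀ t ∈ Icc (0:ℝ) T,
      ∫ ω, Real.exp (q * |β t ω|) ∂P ≤ M) := by
  have hβmoment : ∀ t ∈ Icc 0 T, ∫⁻ ω, ENNReal.ofReal (exp (q * |β t ω|)) ∂P
      ≤ ENNReal.ofReal (2 * exp (T * q ^ 2 / 2)) := fun t ht => by
    have hlaw : P.map (β t) = gaussianReal 0 t.toNNReal := by
      simpa [hβ0] using hβgauss 0 t le_rfl ht.1
    refine (lintegral_exp_mul_abs_le_of_map_eq_gaussianReal hlaw q).trans ?_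
    gcongr
    simpa [ht.1] using ht.2
  refine ⟨⟨exp (q * (ε₀ * M0)) * (2 * exp (T * q ^ 2 / 2)), fun ε hε t ht => ?_⟩,
    ⟨_, fun t ht => integral_le_of_lintegral_ofReal_le (fun _ => (exp_pos _).le) (by positivity)
      (hβmoment t ht)⟩⟩
  have hεM : 0 ≤ ε * |m0 ε| ∧ ε * |m0 ε| ≤ ε₀ * M0 := ⟨by positivity [hε.1.le],
    mul_le_mul hε.2.le (hm0 ε hε) (abs_nonneg _) (hε.1.trans hε.2).le⟩
  obtain rfl | ht0 := ht.1.eq_or_lt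
  · have hζ : ∀ ω, zetaOU β ε (m0 ε) 0 ω = 0 := by simp [zetaOU]
    simp only [hζ, abs_zero, mul_zero, exp_zero, integral_const, probReal_univ, smul_eq_mul,
      mul_one]
    exact one_le_mul_of_one_le_of_one_le (one_le_exp (by nlinarith))
      (by nlinarith [one_le_exp (by positivity [ht.2] : 0 ≤ T * q ^ 2 / 2)])
  refine integral_le_of_lintegral_ofReal_le (fun _ => (exp_pos _).le) (by positivity) ?_
  refine (lintegral_exp_mul_abs_zetaOU_le hβmeas hβcont hq.le hε.1 (m0 ε) ht0
    fun u hu => hβmoment u ⟨hu.1.le, hu.2.trans ht.2⟩).trans (ENNReal.ofReal_le_ofReal ?_)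
  gcongr exp (q * ?_) * _
  exact hεM.2

/-- **Lemma (uniform exponential moment bounds for ζ^ε and β).** For every `T ∈ (0,∞)` and
`q ∈ (0,∞)`, `sup_{ε∈(0,ε₀)} sup_{0≤t≤T} 𝔼[e^{q|ζ^ε(t)|}] < ∞` and
`sup_{0≤t≤T} 𝔼[e^{q|β(t)|}] < ∞`. -/
theorem zeta_beta_exponential_moments
    {Ω : Type*} [MeasurableSpace Ω] (P : Measure Ω) [IsProbabilityMeasure P]
    (β : ℝ → Ω → ℝ)
    (hβmeas : ∀ t, Measurable (β t))
    (hβ0 : ∀ ω, β 0 ω = 0)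
    (hβcont : ∀ᵐ ω ∂P, Continuous fun t => β t ω)
    (hβgauss : ∀ s t : ℝ, 0 ≤ s → s ≤ t →
      Measure.map (fun ω => β t ω - β s ω) P = gaussianReal 0 (Real.toNNReal (t - s)))
    (hβindep : ∀ (n : ℕ) (u : ℕ → ℝ), Monotone u → 0 ≤ u 0 →
      iIndepFun
        (fun (i : Fin n) (ω : Ω) => β (u (i.1 + 1)) ω - β (u i.1) ω) P)
    (ε₀ : ℝ) (hε₀ : 0 < ε₀)
    (m0 : ℝ → ℝ) (M0 : ℝ) (hm0 : ∀ ε ∈ Ioo (0:ℝ) ε₀, |m0 ε| ≤ M0)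
    (T : ℝ) (hT : 0 < T) (q : ℝ) (hq : 0 < q) :
    (∃ M : ℝ, ∀ ε ∈ Ioo (0:ℝ) ε₀, ∀ t ∈ Icc (0:ℝ) T,
      ∫ ω, Real.exp (q * |zetaOU β ε (m0 ε) t ω|) ∂P ≤ M) ∧
    (∃ M : ℝ, ∀ t ∈ Icc (0:ℝ) T,
      ∫ ω, Real.exp (q * |β t ω|) ∂P ≤ M) :=
  zeta_beta_exponential_moments_general P β hβmeas hβ0 hβcont hβgauss ε₀ m0 M0 hm0 T q hq
end

section
/- For every p ∈ [1,∞) one has sup over all ε ∈ (0,ε₀), all Δt = T/N with T ∈ (0,∞), N ∈ ℕ, and all n ∈ ℕ of (𝔼[|m_n^{ε,Δt}|^p])^{1/p} < ∞ (a finite bound depending only on p and sup_{ε∈(0,ε₀)}|m₀^ε|), and for every q ∈ (0,∞) one has sup over the same range of 𝔼[e^{q|m_n^{ε,Δt}|}] < ∞; in particular for p = 2 one has 𝔼[|m_n^{ε,Δt}|²] ≤ sup_{ε'∈(0,ε₀)}|m₀^{ε'}|² + 1/2. -/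
open MeasureTheory ProbabilityTheory Real Set Filter

/-!
The implicit Euler scheme is the linear recursion `m_{n+1} = a m_n + (a / ε) Δβ_n` with
`a = (1 + r)⁻¹ ∈ (0, 1]`, `r = Δt / ε²`, where the increment `Δβ_n ~ N(0, Δt)` is independent of
`m_n`, a function of the earlier increments only. Hence `m_n` is Gaussian with mean `aⁿ m₀` and a
variance obeying `V_{n+1} = a² (V_n + r)`; since `(1 + r)² ≥ 1 + 2r`, the bound `V_n ≤ 1/2`
propagates. All moments of a Gaussian are controlled by its moment generating function through
`e^{q|x|} ≤ e^{qx} + e^{-qx}`.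
-/

open scoped NNReal

lemma exp_mul_abs_le (q x : ℝ) : exp (q * |x|) ≤ exp (q * x) + exp (-q * x) := by
  rcases abs_cases x with ⟨h, -⟩ | ⟨h, -⟩ <;> rw [h] <;> simp only [neg_mul, mul_neg] <;>
    linarith [exp_pos (q * x), exp_pos (-(q * x))]

lemma abs_rpow_le_exp_mul_abs {p : ℝ} (hp : 0 ≤ p) (x : ℝ) : |x| ^ p ≤ exp (p * |x|) := by
  calc |x| ^ p ≤ exp |x| ^ p := by
        gcongr; linarith [add_one_le_exp |x|]
    _ = exp (p * |x|) := by rw [← exp_mul, mul_comm]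

namespace ProbabilityTheory

variable {μ : ℝ} {v : ℝ≥0}

lemma integrable_exp_mul_abs_gaussianReal (q : ℝ) :
    Integrable (fun x => exp (q * |x|)) (gaussianReal μ v) :=
  ((integrable_exp_mul_gaussianReal q).add (integrable_exp_mul_gaussianReal (-q))).mono'
    (by fun_prop) (.of_forall fun x => by
      rw [norm_of_nonneg (exp_pos _).le]; exact exp_mul_abs_le q x)

lemma integral_exp_mul_abs_gaussianReal_le {q : ℝ} (hq : 0 ≤ q) :
    ∫ x, exp (q * |x|) ∂gaussianReal μ v ≤ 2 * exp (q * |μ| + v * q ^ 2 / 2) := by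
  have hmgf (t : ℝ) : ∫ x, exp (t * x) ∂gaussianReal μ v = exp (μ * t + v * t ^ 2 / 2) :=
    congrFun mgf_fun_id_gaussianReal t
  calc ∫ x, exp (q * |x|) ∂gaussianReal μ v
      ≤ ∫ x, exp (q * x) + exp (-q * x) ∂gaussianReal μ v :=
        integral_mono (integrable_exp_mul_abs_gaussianReal q)
          ((integrable_exp_mul_gaussianReal q).add (integrable_exp_mul_gaussianReal (-q)))
          (exp_mul_abs_le q)
    _ = exp (μ * q + v * q ^ 2 / 2) + exp (-(μ * q) + v * q ^ 2 / 2) := by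
        rw [integral_add (integrable_exp_mul_gaussianReal q)
          (integrable_exp_mul_gaussianReal (-q)), hmgf, hmgf, neg_sq, mul_neg]
    _ ≤ exp (q * |μ| + v * q ^ 2 / 2) + exp (q * |μ| + v * q ^ 2 / 2) := by
        gcongr exp (?_ + _) + exp (?_ + _)
        · nlinarith [le_abs_self μ]
        · nlinarith [neg_abs_le μ]
    _ = 2 * exp (q * |μ| + v * q ^ 2 / 2) := by ring

lemma integral_abs_rpow_gaussianReal_le {p : ℝ} (hp : 0 ≤ p) :
    ∫ x, |x| ^ p ∂gaussianReal μ v ≤ 2 * exp (p * |μ| + v * p ^ 2 / 2) :=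
  (integral_mono_of_nonneg (.of_forall fun x => by positivity)
    (integrable_exp_mul_abs_gaussianReal p) (.of_forall (abs_rpow_le_exp_mul_abs hp))).trans
    (integral_exp_mul_abs_gaussianReal_le hp)

lemma integral_abs_rpow_gaussianReal_rpow_inv_le {p : ℝ} (hp : 1 ≤ p) :
    (∫ x, |x| ^ p ∂gaussianReal μ v) ^ (1 / p) ≤ 2 * exp (|μ| + v * p / 2) := by
  have hp₀ : 0 < p := zero_lt_one.trans_le hp
  calc (∫ x, |x| ^ p ∂gaussianReal μ v) ^ (1 / p)
      ≤ (2 * exp (p * |μ| + v * p ^ 2 / 2)) ^ (1 / p) := by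
        gcongr
        exact integral_abs_rpow_gaussianReal_le hp₀.le
    _ = 2 ^ (1 / p) * exp (|μ| + v * p / 2) := by
        rw [mul_rpow zero_le_two (exp_pos _).le, ← exp_mul]
        congr 2
        field_simp
    _ ≤ 2 * exp (|μ| + v * p / 2) := by
        gcongr
        exact rpow_le_self_of_one_le one_le_two ((div_le_one hp₀).2 hp)

lemma integral_sq_gaussianReal : ∫ x, x ^ 2 ∂gaussianReal μ v = μ ^ 2 + v := by
  have := variance_eq_sub (memLp_id_gaussianReal (μ := μ) (v := v) 2)
  simp only [variance_id_gaussianReal, Pi.pow_apply, id, integral_id_gaussianReal] at this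
  linarith

variable {Ω : Type*} [MeasurableSpace Ω] {P : Measure Ω}

lemma indepFun_of_recursion {α β : Type*} [MeasurableSpace α] [MeasurableSpace β]
    {Y : ℕ → Ω → α} (hY : ∀ n, Measurable (Y n))
    (hYindep : ∀ n, iIndepFun (fun i : Fin n => Y i) P)
    {g : ℕ → β → α → β} (hg : ∀ n, Measurable (Function.uncurry (g n)))
    {X : ℕ → Ω → β} {x₀ : β} (hX₀ : ∀ ω, X 0 ω = x₀)
    (hX : ∀ n ω, X (n + 1) ω = g n (X n ω) (Y n ω)) (n : ℕ) :
    IndepFun (X n) (Y n) P := by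
  let m : Fin (n + 1) → MeasurableSpace Ω := fun i => MeasurableSpace.comap (Y i) inferInstance
  let past : MeasurableSpace Ω := ⨆ i ∈ Iio (Fin.last n), m i
  have hpast : ∀ k ≤ n, Measurable[past] (X k) := by
    intro k hk
    induction k with
    | zero => rw [funext hX₀]; exact measurable_const
    | succ k ih =>
      have hYk : Measurable[past] (Y k) := Measurable.of_comap_le <|
        le_iSup₂ (f := fun i (_ : i ∈ Iio (Fin.last n)) => m i) (⟨k, by omega⟩ : Fin (n + 1))
          (by simp only [mem_Iio, Fin.lt_def, Fin.val_last]; omega)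
      rw [funext (hX k)]
      exact (hg k).comp ((ih (by omega)).prodMk hYk)
  have hindep : Indep past (m (Fin.last n)) P := by
    have := indep_iSup_of_disjoint (m := m) (fun i => (hY i).comap_le)
      ((iIndepFun_iff_iIndep (fun _ => inferInstance) (fun i : Fin (n + 1) => Y i) P).1
        (hYindep (n + 1)))
      (Set.disjoint_singleton_right.2 (self_notMem_Iio (a := Fin.last n)))
    rwa [iSup_singleton] at this
  exact (IndepFun_iff_Indep _ _ _).2 (indep_of_indep_of_le_left hindep (hpast n le_rfl).comap_le)

lemma hasLaw_gaussianReal_of_recursion [IsProbabilityMeasure P] {X Y : ℕ → Ω → ℝ} {x₀ a b : ℝ}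
    {v W : ℝ≥0} (hX₀ : ∀ ω, X 0 ω = x₀) (hX : ∀ n ω, X (n + 1) ω = a * X n ω + b * Y n ω)
    (hY : ∀ n, HasLaw (Y n) (gaussianReal 0 v) P) (hXY : ∀ n, IndepFun (X n) (Y n) P)
    (hW : a ^ 2 * W + b ^ 2 * v ≤ W) (n : ℕ) :
    ∃ V ≤ W, HasLaw (X n) (gaussianReal (a ^ n * x₀) V) P := by
  induction n with
  | zero =>
    refine ⟨0, bot_le, ?_⟩
    rw [pow_zero, one_mul, gaussianReal_zero_var]
    exact hasLaw_dirac_of_ae_eq (.of_forall hX₀)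
  | succ n ih =>
    obtain ⟨V, hVW, hXn⟩ := ih
    have haX : HasLaw (fun ω => a * X n ω)
        (gaussianReal (a * (a ^ n * x₀)) (.mk (a ^ 2) (sq_nonneg _) * V)) P :=
      HasLaw.comp ⟨by fun_prop, gaussianReal_map_const_mul a⟩ hXn
    have hbY : HasLaw (fun ω => b * Y n ω)
        (gaussianReal (b * 0) (.mk (b ^ 2) (sq_nonneg _) * v)) P :=
      HasLaw.comp ⟨by fun_prop, gaussianReal_map_const_mul b⟩ (hY n)
    have := ((hXY n).comp (measurable_const_mul a) (measurable_const_mul b)).hasLaw_fun_add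
      haX hbY
    rw [gaussianReal_conv_gaussianReal, mul_zero, add_zero, ← mul_assoc, ← pow_succ'] at this
    refine ⟨_, ?_, by rwa [funext (hX n)]⟩
    rw [← NNReal.coe_le_coe]
    push_cast
    nlinarith [sq_nonneg a, NNReal.coe_le_coe.2 hVW]

lemma hasLaw_implicitEuler [IsProbabilityMeasure P] (β : ℝ → Ω → ℝ)
    (hβmeas : ∀ t, Measurable (β t))
    (hβgauss : ∀ s t : ℝ, 0 ≤ s → s ≤ t →
      Measure.map (fun ω => β t ω - β s ω) P = gaussianReal 0 (Real.toNNReal (t - s)))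
    (hβindep : ∀ (n : ℕ) (u : ℕ → ℝ), Monotone u → 0 ≤ u 0 →
      iIndepFun (fun (i : Fin n) (ω : Ω) => β (u (i.1 + 1)) ω - β (u i.1) ω) P)
    {ε Δ x₀ : ℝ} (hΔ : 0 ≤ Δ) {m : ℕ → Ω → ℝ} (hm₀ : ∀ ω, m 0 ω = x₀)
    (hm : ∀ (n : ℕ) ω,
      m (n + 1) ω = (m n ω + (β (((n : ℝ) + 1) * Δ) ω - β ((n : ℝ) * Δ) ω) / ε) / (1 + Δ / ε ^ 2))
    (n : ℕ) : ∃ (μ : ℝ) (V : ℝ≥0), |μ| ≤ |x₀| ∧ V ≤ 1 / 2 ∧ HasLaw (m n) (gaussianReal μ V) P := by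
  set r := Δ / ε ^ 2
  have hr : 0 ≤ r := by positivity
  set a := (1 + r)⁻¹
  have ha₀ : 0 ≤ a := by positivity
  have ha₁ : a ≤ 1 := inv_le_one_of_one_le₀ (by linarith)
  set Y : ℕ → Ω → ℝ := fun k ω => β (((k : ℝ) + 1) * Δ) ω - β ((k : ℝ) * Δ) ω
  have hYmeas (k : ℕ) : Measurable (Y k) := (hβmeas _).sub (hβmeas _)
  have hYlaw (k : ℕ) : HasLaw (Y k) (gaussianReal 0 Δ.toNNReal) P := by
    refine ⟨(hYmeas k).aemeasurable, ?_⟩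
    have := hβgauss ((k : ℝ) * Δ) (((k : ℝ) + 1) * Δ) (by positivity) (by nlinarith)
    rwa [show ((k : ℝ) + 1) * Δ - k * Δ = Δ by ring] at this
  have hYindep (k : ℕ) : iIndepFun (fun i : Fin k => Y i) P := by
    have := hβindep k (fun j => (j : ℝ) * Δ) (Nat.mono_cast.mul_const hΔ) (by simp)
    simpa only [Nat.cast_add, Nat.cast_one] using this
  have hrec (k : ℕ) (ω : Ω) : m (k + 1) ω = a * m k ω + (a / ε) * Y k ω := by
    rw [hm]; ring
  have hW : a ^ 2 * ((1 / 2 : ℝ≥0) : ℝ) + (a / ε) ^ 2 * (Δ.toNNReal : ℝ) ≤ (1 / 2 : ℝ≥0) := by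
    have hΔr : (a / ε) ^ 2 * Δ = a ^ 2 * r := by ring
    have hsq : a ^ 2 * (1 + r) ^ 2 = 1 := by
      rw [← mul_pow, inv_mul_cancel₀ (by positivity), one_pow]
    push_cast
    rw [Real.coe_toNNReal _ hΔ, hΔr]
    nlinarith [sq_nonneg (a * r)]
  obtain ⟨V, hV, hlaw⟩ := hasLaw_gaussianReal_of_recursion hm₀ hrec hYlaw
    (indepFun_of_recursion hYmeas hYindep (g := fun _ x y => a * x + a / ε * y)
      (fun _ => by fun_prop) hm₀ hrec) hW n
  refine ⟨a ^ n * x₀, V, ?_, hV, hlaw⟩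
  rw [abs_mul, abs_pow, abs_of_nonneg ha₀]
  exact mul_le_of_le_one_left (abs_nonneg _) (pow_le_one₀ ha₀ ha₁)

end ProbabilityTheory

theorem discrete_OU_moment_bounds_general
    {Ω : Type*} [MeasurableSpace Ω] (P : Measure Ω) [IsProbabilityMeasure P]
    (β : ℝ → Ω → ℝ)
    (hβmeas : ∀ t, Measurable (β t))
    (hβgauss : ∀ s t : ℝ, 0 ≤ s → s ≤ t →
      Measure.map (fun ω => β t ω - β s ω) P = gaussianReal 0 (Real.toNNReal (t - s)))
    (hβindep : ∀ (n : ℕ) (u : ℕ → ℝ), Monotone u → 0 ≤ u 0 →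
      iIndepFun
        (fun (i : Fin n) (ω : Ω) => β (u (i.1 + 1)) ω - β (u i.1) ω) P)
    (ε₀ : ℝ)
    (m0 : ℝ → ℝ) (M0 : ℝ) (hm0 : ∀ ε ∈ Ioo (0:ℝ) ε₀, |m0 ε| ≤ M0) :
    (∀ p : ℝ, 1 ≤ p → ∃ M : ℝ,
      ∀ ε ∈ Ioo (0:ℝ) ε₀, ∀ T : ℝ, 0 < T → ∀ N : ℕ, 1 ≤ N →
      ∀ mD : ℕ → Ω → ℝ,
        (∀ ω, mD 0 ω = m0 ε) →
        (∀ (n : ℕ) ω, mD (n + 1) ω =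
          (mD n ω + (β (((n : ℝ) + 1) * (T / N)) ω - β ((n : ℝ) * (T / N)) ω) / ε)
            / (1 + (T / N) / ε ^ 2)) →
        ∀ n : ℕ, (∫ ω, |mD n ω| ^ p ∂P) ^ (1 / p) ≤ M) ∧
    (∀ q : ℝ, 0 < q → ∃ M : ℝ,
      ∀ ε ∈ Ioo (0:ℝ) ε₀, ∀ T : ℝ, 0 < T → ∀ N : ℕ, 1 ≤ N →
      ∀ mD : ℕ → Ω → ℝ,
        (∀ ω, mD 0 ω = m0 ε) →
        (∀ (n : ℕ) ω, mD (n + 1) ω =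
          (mD n ω + (β (((n : ℝ) + 1) * (T / N)) ω - β ((n : ℝ) * (T / N)) ω) / ε)
            / (1 + (T / N) / ε ^ 2)) →
        ∀ n : ℕ, ∫ ω, Real.exp (q * |mD n ω|) ∂P ≤ M) ∧
    (∀ ε ∈ Ioo (0:ℝ) ε₀, ∀ T : ℝ, 0 < T → ∀ N : ℕ, 1 ≤ N →
      ∀ mD : ℕ → Ω → ℝ,
        (∀ ω, mD 0 ω = m0 ε) →
        (∀ (n : ℕ) ω, mD (n + 1) ω =
          (mD n ω + (β (((n : ℝ) + 1) * (T / N)) ω - β ((n : ℝ) * (T / N)) ω) / ε)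
            / (1 + (T / N) / ε ^ 2)) →
        ∀ n : ℕ, ∫ ω, |mD n ω| ^ (2 : ℝ) ∂P ≤ M0 ^ 2 + 1 / 2) := by
  refine ⟨fun p hp => ⟨2 * exp (M0 + 1 / 2 * p / 2), ?_⟩,
    fun q hq => ⟨2 * exp (q * M0 + 1 / 2 * q ^ 2 / 2), ?_⟩, ?_⟩ <;>
  intro ε hε T hT N _ mD h0 hrec n <;>
  obtain ⟨μ, V, hμ, hV, hX⟩ :=
    hasLaw_implicitEuler β hβmeas hβgauss hβindep (by positivity) h0 hrec n <;>
  replace hμ := hμ.trans (hm0 ε hε) <;>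
  replace hV : (V : ℝ) ≤ 1 / 2 := by exact_mod_cast hV
  · rw [show ∫ ω, |mD n ω| ^ p ∂P = ∫ x, |x| ^ p ∂gaussianReal μ V from
      hX.integral_comp (f := fun x => |x| ^ p) (Measurable.aestronglyMeasurable (by fun_prop))]
    refine (integral_abs_rpow_gaussianReal_rpow_inv_le hp).trans ?_
    gcongr
  · refine ((hX.integral_comp (f := fun x => exp (q * |x|)) (by fun_prop)).trans_le
      (integral_exp_mul_abs_gaussianReal_le hq.le)).trans ?_
    gcongr
  · simp_rw [rpow_two, sq_abs]
    refine ((hX.integral_comp (f := fun x => x ^ 2) (by fun_prop)).trans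
      integral_sq_gaussianReal).trans_le ?_
    exact add_le_add (sq_le_sq' (neg_le_of_abs_le hμ) (le_of_abs_le hμ)) hV

/-- **Lemma (uniform moment bounds for the discretized OU component).** For every `p ∈ [1,∞)`
the `L^p` norms of `m_n^{ε,Δt}` are bounded uniformly in `ε ∈ (0,ε₀)`, `Δt = T/N` and `n`;
similarly for the exponential moments; and for `p = 2` one has
`𝔼[|m_n^{ε,Δt}|²] ≤ sup_{ε'} |m₀^{ε'}|² + 1/2`. -/
theorem discrete_OU_moment_bounds
    {Ω : Type*} [MeasurableSpace Ω] (P : Measure Ω) [IsProbabilityMeasure P]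
    (β : ℝ → Ω → ℝ)
    (hβmeas : ∀ t, Measurable (β t))
    (hβ0 : ∀ ω, β 0 ω = 0)
    (hβcont : ∀ᵐ ω ∂P, Continuous fun t => β t ω)
    (hβgauss : ∀ s t : ℝ, 0 ≤ s → s ≤ t →
      Measure.map (fun ω => β t ω - β s ω) P = gaussianReal 0 (Real.toNNReal (t - s)))
    (hβindep : ∀ (n : ℕ) (u : ℕ → ℝ), Monotone u → 0 ≤ u 0 →
      iIndepFun
        (fun (i : Fin n) (ω : Ω) => β (u (i.1 + 1)) ω - β (u i.1) ω) P)
    (ε₀ : ℝ) (hε₀ : 0 < ε₀)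
    (m0 : ℝ → ℝ) (M0 : ℝ) (hm0 : ∀ ε ∈ Ioo (0:ℝ) ε₀, |m0 ε| ≤ M0) :
    (∀ p : ℝ, 1 ≤ p → ∃ M : ℝ,
      ∀ ε ∈ Ioo (0:ℝ) ε₀, ∀ T : ℝ, 0 < T → ∀ N : ℕ, 1 ≤ N →
      ∀ mD : ℕ → Ω → ℝ,
        (∀ ω, mD 0 ω = m0 ε) →
        (∀ (n : ℕ) ω, mD (n + 1) ω =
          (mD n ω + (β (((n : ℝ) + 1) * (T / N)) ω - β ((n : ℝ) * (T / N)) ω) / ε)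
            / (1 + (T / N) / ε ^ 2)) →
        ∀ n : ℕ, (∫ ω, |mD n ω| ^ p ∂P) ^ (1 / p) ≤ M) ∧
    (∀ q : ℝ, 0 < q → ∃ M : ℝ,
      ∀ ε ∈ Ioo (0:ℝ) ε₀, ∀ T : ℝ, 0 < T → ∀ N : ℕ, 1 ≤ N →
      ∀ mD : ℕ → Ω → ℝ,
        (∀ ω, mD 0 ω = m0 ε) →
        (∀ (n : ℕ) ω, mD (n + 1) ω =
          (mD n ω + (β (((n : ℝ) + 1) * (T / N)) ω - β ((n : ℝ) * (T / N)) ω) / ε)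
            / (1 + (T / N) / ε ^ 2)) →
        ∀ n : ℕ, ∫ ω, Real.exp (q * |mD n ω|) ∂P ≤ M) ∧
    (∀ ε ∈ Ioo (0:ℝ) ε₀, ∀ T : ℝ, 0 < T → ∀ N : ℕ, 1 ≤ N →
      ∀ mD : ℕ → Ω → ℝ,
        (∀ ω, mD 0 ω = m0 ε) →
        (∀ (n : ℕ) ω, mD (n + 1) ω =
          (mD n ω + (β (((n : ℝ) + 1) * (T / N)) ω - β ((n : ℝ) * (T / N)) ω) / ε)
            / (1 + (T / N) / ε ^ 2)) →
        ∀ n : ℕ, ∫ ω, |mD n ω| ^ (2 : ℝ) ∂P ≤ M0 ^ 2 + 1 / 2) :=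
  discrete_OU_moment_bounds_general P β hβmeas hβgauss hβindep ε₀ m0 M0 hm0
end

section
/- For every p ∈ [1,∞) there exists C_p ∈ (0,∞) such that for all ε ∈ (0,ε₀), all Δt = T/N with T ∈ (0,∞), N ∈ ℕ, and all n ≥ 0, one has (𝔼[|Δt m_{n+1}^{ε,Δt}/ε − Δβ_n|^p])^{1/p} ≤ C_p ε; in particular Δt m_{n+1}^{ε,Δt}/ε converges to the Brownian increment Δβ_n in L^p(Ω) as ε → 0, uniformly in Δt and n. -/
open MeasureTheory ProbabilityTheory Real Set Filter

/-!
With `s = √(Δt) / ε` the scheme reads `m_{k+1} = (m_k + ξ_k) / (1 + s²)` with `ξ_k = Δβ_k / ε`,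
and `‖ξ_k‖_p = s ‖Z‖_p` for a standard Gaussian `Z`. By Minkowski's inequality, `M + ‖Z‖_p / s`
(where `|m_0| ≤ M`) is an invariant bound for `‖m_k‖_p`. The error is
`Δt m_{n+1} / ε - Δβ_n = ε (m_n - m_{n+1}) = ε (s² m_n - ξ_n) / (1 + s²)`, so its `L^p` norm is
at most `ε (s² M + 2 s ‖Z‖_p) / (1 + s²) ≤ ε (M + ‖Z‖_p)`, using `2 s ≤ 1 + s²`: the factor `s²`
absorbs the `1 / s` of the invariant bound, which makes the estimate uniform in `Δt`.
-/

open scoped ENNReal NNReal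

section

variable {Ω E : Type*} [MeasurableSpace Ω] {P : Measure Ω} {q : ℝ≥0∞}
  [NormedAddCommGroup E]

lemma ProbabilityTheory.HasLaw.eLpNorm_eq [MeasurableSpace E] [OpensMeasurableSpace E]
    [SecondCountableTopology E] {X : Ω → E} {μ : Measure E} (hX : HasLaw X μ P) :
    eLpNorm X q P = eLpNorm id q μ := by
  rw [← hX.map_eq, eLpNorm_map_measure aestronglyMeasurable_id hX.aemeasurable, Function.id_comp]

lemma eLpNorm_id_gaussianReal (v : ℝ≥0) :
    eLpNorm id q (gaussianReal 0 v) = ENNReal.ofReal √v * eLpNorm id q (gaussianReal 0 1) := by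
  have hscale : gaussianReal 0 v = (gaussianReal 0 1).map (√v * ·) := by
    rw [gaussianReal_map_const_mul, mul_zero, mul_one]
    congr
    ext
    simp
  rw [hscale, eLpNorm_map_measure aestronglyMeasurable_id (by fun_prop), Function.id_comp,
    show (√v * ·) = (√v : ℝ) • (id : ℝ → ℝ) from rfl, eLpNorm_const_smul,
    Real.enorm_of_nonneg (Real.sqrt_nonneg _)]

variable [NormedSpace ℝ E]

lemma eLpNorm_smul_add_smul_le (hq : 1 ≤ q) {f g : Ω → E}
    (hf : AEStronglyMeasurable f P) (hg : AEStronglyMeasurable g P) {A B : ℝ}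
    (hA : 0 ≤ A) (hB : 0 ≤ B) (hfA : eLpNorm f q P ≤ ENNReal.ofReal A)
    (hgB : eLpNorm g q P ≤ ENNReal.ofReal B) (a b : ℝ) :
    eLpNorm (a • f + b • g) q P ≤ ENNReal.ofReal (|a| * A + |b| * B) := by
  calc eLpNorm (a • f + b • g) q P
      ≤ eLpNorm (a • f) q P + eLpNorm (b • g) q P :=
        eLpNorm_add_le (hf.const_smul a) (hg.const_smul b) hq
    _ = ENNReal.ofReal |a| * eLpNorm f q P + ENNReal.ofReal |b| * eLpNorm g q P := by
        rw [eLpNorm_const_smul, eLpNorm_const_smul, Real.enorm_eq_ofReal_abs,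
          Real.enorm_eq_ofReal_abs]
    _ ≤ ENNReal.ofReal |a| * ENNReal.ofReal A + ENNReal.ofReal |b| * ENNReal.ofReal B := by
        gcongr
    _ = ENNReal.ofReal (|a| * A + |b| * B) := by
        rw [ENNReal.ofReal_add (by positivity) (by positivity),
          ENNReal.ofReal_mul (abs_nonneg a), ENNReal.ofReal_mul (abs_nonneg b)]

lemma eLpNorm_le_of_implicit_euler (hq : 1 ≤ q) {m ξ : ℕ → Ω → E} {s M a : ℝ} (hs : 0 < s)
    (hm : ∀ k, m (k + 1) = (1 + s ^ 2)⁻¹ • (m k + ξ k))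
    (hmeas : ∀ k, AEStronglyMeasurable (m k) P) (hξ : ∀ k, AEStronglyMeasurable (ξ k) P)
    (hM : 0 ≤ M) (hmM : eLpNorm (m 0) q P ≤ ENNReal.ofReal M)
    (ha : 0 ≤ a) (hξa : ∀ k, eLpNorm (ξ k) q P ≤ ENNReal.ofReal (s * a)) (k : ℕ) :
    eLpNorm (m k) q P ≤ ENNReal.ofReal (M + a / s) := by
  induction k with
  | zero => exact hmM.trans (ENNReal.ofReal_le_ofReal (le_add_of_nonneg_right (by positivity)))
  | succ k ih =>
    rw [hm k, smul_add]
    refine (eLpNorm_smul_add_smul_le hq (hmeas k) (hξ k) (by positivity) (by positivity) ih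
      (hξa k) _ _).trans (ENNReal.ofReal_le_ofReal ?_)
    rw [abs_of_pos (by positivity), ← mul_add, inv_mul_le_iff₀ (by positivity)]
    have : s * a = s ^ 2 * (a / s) := by field_simp
    nlinarith [mul_nonneg (sq_nonneg s) hM]

lemma eLpNorm_sub_succ_le_of_implicit_euler (hq : 1 ≤ q) {m ξ : ℕ → Ω → E} {s M a : ℝ}
    (hs : 0 < s) (hm : ∀ k, m (k + 1) = (1 + s ^ 2)⁻¹ • (m k + ξ k))
    (hmeas : ∀ k, AEStronglyMeasurable (m k) P) (hξ : ∀ k, AEStronglyMeasurable (ξ k) P)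
    (hM : 0 ≤ M) (hmM : eLpNorm (m 0) q P ≤ ENNReal.ofReal M)
    (ha : 0 ≤ a) (hξa : ∀ k, eLpNorm (ξ k) q P ≤ ENNReal.ofReal (s * a)) (n : ℕ) :
    eLpNorm (m n - m (n + 1)) q P ≤ ENNReal.ofReal (M + a) := by
  have hsplit : m n - m (n + 1) = ((1 + s ^ 2)⁻¹ * s ^ 2) • m n + (-(1 + s ^ 2)⁻¹) • ξ n := by
    rw [hm n, eq_comm, ← sub_eq_zero]
    match_scalars <;> field_simp <;> ring
  rw [hsplit]
  refine (eLpNorm_smul_add_smul_le hq (hmeas n) (hξ n) (by positivity) (by positivity)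
    (eLpNorm_le_of_implicit_euler hq hs hm hmeas hξ hM hmM ha hξa n)
    (hξa n) _ _).trans (ENNReal.ofReal_le_ofReal ?_)
  rw [abs_neg, abs_of_pos (by positivity), abs_of_pos (by positivity), mul_assoc, ← mul_add,
    inv_mul_le_iff₀ (by positivity)]
  have h2s : 2 * s ≤ 1 + s ^ 2 := by nlinarith [sq_nonneg (s - 1)]
  have : s ^ 2 * (M + a / s) = s ^ 2 * M + s * a := by field_simp
  nlinarith [mul_le_mul_of_nonneg_right h2s ha, mul_nonneg (sq_nonneg s) hM]

lemma rpow_integral_abs_rpow_le_of_eLpNorm_le {f : Ω → ℝ} {p C : ℝ} (hp : 0 < p) (hC : 0 ≤ C)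
    (hf : AEStronglyMeasurable f P)
    (hfC : eLpNorm f (ENNReal.ofReal p) P ≤ ENNReal.ofReal C) :
    (∫ ω, |f ω| ^ p ∂P) ^ (1 / p) ≤ C := by
  have hmem : MemLp f (ENNReal.ofReal p) P := ⟨hf, hfC.trans_lt ENNReal.ofReal_lt_top⟩
  rw [hmem.eLpNorm_eq_integral_rpow_norm (by simpa using hp) ENNReal.ofReal_ne_top,
    ENNReal.toReal_ofReal hp.le] at hfC
  simpa [Real.norm_eq_abs, one_div] using (ENNReal.ofReal_le_ofReal_iff hC).mp hfC

lemma rpow_integral_implicit_euler_error_le {p ε Δ M g : ℝ} (hp : 1 ≤ p) (hε : 0 < ε)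
    (hΔ : 0 < Δ) (hM : 0 ≤ M) (hg : 0 ≤ g)
    {m ΔB : ℕ → Ω → ℝ} (hΔBmeas : ∀ k, Measurable (ΔB k))
    (hΔB : ∀ k, eLpNorm (ΔB k) (ENNReal.ofReal p) P ≤ ENNReal.ofReal (√Δ * g))
    (hm0meas : Measurable (m 0)) (hm0 : eLpNorm (m 0) (ENNReal.ofReal p) P ≤ ENNReal.ofReal M)
    (hm : ∀ k ω, m (k + 1) ω = (m k ω + ΔB k ω / ε) / (1 + Δ / ε ^ 2)) (n : ℕ) :
    (∫ ω, |Δ * m (n + 1) ω / ε - ΔB n ω| ^ p ∂P) ^ (1 / p) ≤ (M + g) * ε := by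
  have hq : 1 ≤ ENNReal.ofReal p := by simpa using ENNReal.ofReal_le_ofReal hp
  set s := √Δ / ε
  have hs : 0 < s := by positivity
  have hΔs : Δ = s ^ 2 * ε ^ 2 := by
    rw [div_pow, Real.sq_sqrt hΔ.le, div_mul_cancel₀ _ (by positivity)]
  set ξ : ℕ → Ω → ℝ := fun k => ε⁻¹ • ΔB k
  have hξmeas : ∀ k, Measurable (ξ k) := fun k => (hΔBmeas k).const_smul _
  have hξ : ∀ k, eLpNorm (ξ k) (ENNReal.ofReal p) P ≤ ENNReal.ofReal (s * g) := by
    intro k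
    rw [eLpNorm_const_smul, Real.enorm_of_nonneg (by positivity)]
    calc ENNReal.ofReal ε⁻¹ * eLpNorm (ΔB k) (ENNReal.ofReal p) P
        ≤ ENNReal.ofReal ε⁻¹ * ENNReal.ofReal (√Δ * g) := by gcongr; exact hΔB k
      _ = ENNReal.ofReal (s * g) := by
        rw [← ENNReal.ofReal_mul (by positivity), ← mul_assoc, inv_mul_eq_div]
  have hstep : ∀ k, m (k + 1) = (1 + s ^ 2)⁻¹ • (m k + ξ k) := by
    intro k
    funext ω
    simp only [hm, hΔs, Pi.smul_apply, Pi.add_apply, smul_eq_mul, ξ]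
    field_simp
  have hmeas : ∀ k, Measurable (m k) := by
    intro k
    induction k with
    | zero => exact hm0meas
    | succ k ih => rw [hstep k]; exact (ih.add (hξmeas k)).const_smul _
  have hX : (fun ω => Δ * m (n + 1) ω / ε - ΔB n ω) = ε • (m n - m (n + 1)) := by
    funext ω
    simp only [hm, hΔs, Pi.smul_apply, Pi.sub_apply, smul_eq_mul]
    field_simp
    ring
  have hmn := eLpNorm_sub_succ_le_of_implicit_euler hq hs hstep
    (fun k => (hmeas k).aestronglyMeasurable) (fun k => (hξmeas k).aestronglyMeasurable) hM hm0
    hg hξ n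
  refine rpow_integral_abs_rpow_le_of_eLpNorm_le (by linarith) (by positivity) ?_ ?_
  · rw [hX]
    exact (((hmeas n).sub (hmeas (n + 1))).const_smul _).aestronglyMeasurable
  · rw [hX, eLpNorm_const_smul, Real.enorm_of_nonneg hε.le, mul_comm,
      ENNReal.ofReal_mul (by positivity)]
    exact mul_le_mul_left hmn _

end

theorem discrete_increment_approximates_brownian_increment_general
    {Ω : Type*} [MeasurableSpace Ω] (P : Measure Ω) [IsProbabilityMeasure P]
    (β : ℝ → Ω → ℝ)
    (hβmeas : ∀ t, Measurable (β t))
    (hβgauss : ∀ s t : ℝ, 0 ≤ s → s ≤ t →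
      Measure.map (fun ω => β t ω - β s ω) P = gaussianReal 0 (Real.toNNReal (t - s)))
    (ε₀ : ℝ)
    (m0 : ℝ → ℝ) (M0 : ℝ) (hm0 : ∀ ε ∈ Ioo (0:ℝ) ε₀, |m0 ε| ≤ M0)
    (p : ℝ) (hp : 1 ≤ p) :
    ∃ Cp : ℝ, 0 < Cp ∧
      ∀ ε ∈ Ioo (0:ℝ) ε₀, ∀ T : ℝ, 0 < T → ∀ N : ℕ, 1 ≤ N →
      ∀ mD : ℕ → Ω → ℝ,
        (∀ ω, mD 0 ω = m0 ε) →
        (∀ (n : ℕ) ω, mD (n + 1) ω =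
          (mD n ω + (β (((n : ℝ) + 1) * (T / N)) ω - β ((n : ℝ) * (T / N)) ω) / ε)
            / (1 + (T / N) / ε ^ 2)) →
        ∀ n : ℕ,
          (∫ ω, |(T / N) * mD (n + 1) ω / ε
              - (β (((n : ℝ) + 1) * (T / N)) ω - β ((n : ℝ) * (T / N)) ω)| ^ p ∂P) ^ (1 / p)
            ≤ Cp * ε := by
  set g := (eLpNorm id (ENNReal.ofReal p) (gaussianReal 0 1)).toReal
  have hg : eLpNorm id (ENNReal.ofReal p) (gaussianReal 0 1) = ENNReal.ofReal g :=
    (ENNReal.ofReal_toReal (memLp_id_gaussianReal' _ ENNReal.ofReal_ne_top).2.ne).symm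
  refine ⟨|M0| + g + 1, by positivity, ?_⟩
  rintro ε ⟨hε, hεε₀⟩ T hT N hN mD h0 hrec n
  have hΔ : 0 < T / N := div_pos hT (Nat.cast_pos.mpr hN)
  have hincrement : ∀ k : ℕ,
      eLpNorm (fun ω => β (((k : ℝ) + 1) * (T / N)) ω - β ((k : ℝ) * (T / N)) ω)
        (ENNReal.ofReal p) P ≤ ENNReal.ofReal (√(T / N) * g) := by
    intro k
    have hlaw := hβgauss ((k : ℝ) * (T / N)) (((k : ℝ) + 1) * (T / N)) (by positivity)
      (by nlinarith)
    rw [show ((k : ℝ) + 1) * (T / N) - k * (T / N) = T / N by ring] at hlaw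
    rw [HasLaw.eLpNorm_eq ⟨by fun_prop, hlaw⟩, eLpNorm_id_gaussianReal,
      hg, Real.coe_toNNReal _ hΔ.le, ENNReal.ofReal_mul (Real.sqrt_nonneg _)]
  have hm0 : eLpNorm (mD 0) (ENNReal.ofReal p) P ≤ ENNReal.ofReal |M0| := by
    rw [funext h0, eLpNorm_const _ (by positivity) (NeZero.ne P), measure_univ,
      ENNReal.one_rpow, mul_one, Real.enorm_eq_ofReal_abs]
    exact ENNReal.ofReal_le_ofReal ((hm0 ε ⟨hε, hεε₀⟩).trans (le_abs_self M0))
  calc _ ≤ (|M0| + g) * ε :=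
        rpow_integral_implicit_euler_error_le hp hε hΔ (abs_nonneg M0) ENNReal.toReal_nonneg
          (fun k => (hβmeas _).sub (hβmeas _)) hincrement (by simp only [funext h0]; fun_prop)
          hm0 hrec n
    _ ≤ (|M0| + g + 1) * ε := by nlinarith

/-- **Lemma (the rescaled discrete increments approximate the Brownian increments).**
For every `p ∈ [1,∞)` there is `C_p ∈ (0,∞)` such that
`(𝔼[|Δt m_{n+1}^{ε,Δt}/ε − Δβ_n|^p])^{1/p} ≤ C_p ε`, uniformly in `Δt = T/N` and `n`. -/
theorem discrete_increment_approximates_brownian_increment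
    {Ω : Type*} [MeasurableSpace Ω] (P : Measure Ω) [IsProbabilityMeasure P]
    (β : ℝ → Ω → ℝ)
    (hβmeas : ∀ t, Measurable (β t))
    (hβ0 : ∀ ω, β 0 ω = 0)
    (hβcont : ∀ᵐ ω ∂P, Continuous fun t => β t ω)
    (hβgauss : ∀ s t : ℝ, 0 ≤ s → s ≤ t →
      Measure.map (fun ω => β t ω - β s ω) P = gaussianReal 0 (Real.toNNReal (t - s)))
    (hβindep : ∀ (n : ℕ) (u : ℕ → ℝ), Monotone u → 0 ≤ u 0 →
      iIndepFun
        (fun (i : Fin n) (ω : Ω) => β (u (i.1 + 1)) ω - β (u i.1) ω) P)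
    (ε₀ : ℝ) (hε₀ : 0 < ε₀)
    (m0 : ℝ → ℝ) (M0 : ℝ) (hm0 : ∀ ε ∈ Ioo (0:ℝ) ε₀, |m0 ε| ≤ M0)
    (p : ℝ) (hp : 1 ≤ p) :
    ∃ Cp : ℝ, 0 < Cp ∧
      ∀ ε ∈ Ioo (0:ℝ) ε₀, ∀ T : ℝ, 0 < T → ∀ N : ℕ, 1 ≤ N →
      ∀ mD : ℕ → Ω → ℝ,
        (∀ ω, mD 0 ω = m0 ε) →
        (∀ (n : ℕ) ω, mD (n + 1) ω =
          (mD n ω + (β (((n : ℝ) + 1) * (T / N)) ω - β ((n : ℝ) * (T / N)) ω) / ε)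
            / (1 + (T / N) / ε ^ 2)) →
        ∀ n : ℕ,
          (∫ ω, |(T / N) * mD (n + 1) ω / ε
              - (β (((n : ℝ) + 1) * (T / N)) ω - β ((n : ℝ) * (T / N)) ω)| ^ p ∂P) ^ (1 / p)
            ≤ Cp * ε :=
  discrete_increment_approximates_brownian_increment_general P β hβmeas hβgauss ε₀ m0 M0 hm0 p hp
end

section
/- For every n ∈ ℕ and every z ∈ [0,∞), one has 0 ≤ (1+z)^{−n} − e^{−nz} ≤ 1/(n+1); in particular sup_{n∈ℕ} sup_{z∈(0,∞)} n | (1+z)^{−n} − e^{−nz} | < ∞. -/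
open Real

lemma exp_neg_cubic {z : ℝ} (hz : 0 ≤ z) (hz1 : z ≤ 1) :
    1 - z + z^2/2 - (2/9)*z^3 ≤ Real.exp (-z) := by
  have hx : |(-z)| ≤ 1 := by rw [abs_neg, abs_of_nonneg hz]; exact hz1
  have h := Real.exp_bound hx (n := 3) (by norm_num)
  rw [abs_neg, abs_of_nonneg hz] at h
  norm_num [Finset.sum_range_succ, Nat.factorial] at h
  have h2 := (abs_le.mp h).1
  nlinarith [h2]

lemma bern2 (z : ℝ) (hz : 0 ≤ z) : ∀ n : ℕ,
    1 + n*z + n*(n-1)/2 * z^2 ≤ (1+z)^n := by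
  intro n
  induction n with
  | zero => norm_num
  | succ n ih =>
    have hnn : (0:ℝ) ≤ (n:ℝ) * ((n:ℝ)-1) := by
      rcases n with _|m
      · simp
      · push_cast; nlinarith [Nat.cast_nonneg (α := ℝ) m]
    have h1 : (1 + n*z + n*(n-1)/2 * z^2) * (1+z) ≤ (1+z)^n * (1+z) :=
      mul_le_mul_of_nonneg_right ih (by linarith)
    rw [pow_succ (1+z) n]
    push_cast
    nlinarith [h1, mul_nonneg (mul_nonneg hnn hz) (sq_nonneg z)]

lemma pow_sub_pow_le' (a b : ℝ) (hb : 0 ≤ b) (hba : b ≤ a) :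
    ∀ n : ℕ, a^(n+1) - b^(n+1) ≤ (n+1) * a^n * (a-b) := by
  intro n
  induction n with
  | zero => simp
  | succ n ih =>
    have ha : 0 ≤ a := hb.trans hba
    have hpow : b^(n+1) ≤ a^(n+1) := pow_le_pow_left₀ hb hba _
    have e3 : a^(n+1) = a^n * a := pow_succ _ _
    have h1 : (a^(n+1) - b^(n+1)) * a ≤ ((n:ℝ)+1) * a^(n+1) * (a-b) := by
      calc (a^(n+1) - b^(n+1)) * a ≤ (((n:ℝ)+1) * a^n * (a-b)) * a :=
            mul_le_mul_of_nonneg_right ih ha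
        _ = ((n:ℝ)+1) * a^(n+1) * (a-b) := by rw [e3]; ring
    have h2 : b^(n+1) * (a-b) ≤ a^(n+1) * (a-b) :=
      mul_le_mul_of_nonneg_right hpow (sub_nonneg.2 hba)
    rw [pow_succ a, pow_succ b]
    push_cast
    nlinarith [h1, h2]

lemma euler_key (n : ℕ) (z : ℝ) (hz : 0 ≤ z) :
    0 ≤ ((1 + z) ^ n)⁻¹ - Real.exp (-(n * z)) ∧
    ((1 + z) ^ n)⁻¹ - Real.exp (-(n * z)) ≤ 1 / (n + 1) := by
  have h1z : (0:ℝ) < 1 + z := by linarith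
  have hexp : Real.exp (-(n * z)) = (Real.exp (-z)) ^ n := by
    rw [← Real.exp_nat_mul]; ring_nf
  have hb0 : 0 ≤ Real.exp (-z) := (Real.exp_pos _).le
  have hba : Real.exp (-z) ≤ (1 + z)⁻¹ := by
    rw [Real.exp_neg]
    exact inv_anti₀ h1z (by linarith [Real.add_one_le_exp z])
  have hinv : ((1 + z) ^ n)⁻¹ = ((1 + z)⁻¹) ^ n := by rw [inv_pow]
  constructor
  · rw [hexp, hinv]
    have := pow_le_pow_left₀ hb0 hba n
    linarith
  · rcases le_or_gt z 1 with hz1 | hz1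
    · -- case z ≤ 1
      rcases n with _ | m
      · simp
      · have hc := exp_neg_cubic hz hz1
        have hu : (0:ℝ) < (1+z)⁻¹ := by positivity
        have e : (1+z)⁻¹ * (1+z) = 1 := inv_mul_cancel₀ (ne_of_gt h1z)
        have hpoly : 1 - z^2/2 ≤ (1 - z + z^2/2 - (2/9)*z^3) * (1+z) := by
          nlinarith [mul_nonneg (pow_nonneg hz 3) (sub_nonneg.2 hz1)]
        have h5 : (1 - z^2/2) * (1+z)⁻¹ ≤ Real.exp (-z) := by
          calc (1 - z^2/2) * (1+z)⁻¹
              ≤ ((1 - z + z^2/2 - (2/9)*z^3) * (1+z)) * (1+z)⁻¹ :=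
                mul_le_mul_of_nonneg_right hpoly hu.le
            _ = (1 - z + z^2/2 - (2/9)*z^3) * ((1+z)⁻¹ * (1+z)) := by ring
            _ = 1 - z + z^2/2 - (2/9)*z^3 := by rw [e, mul_one]
            _ ≤ Real.exp (-z) := hc
        have hab : (1+z)⁻¹ - Real.exp (-z) ≤ z^2/2 * (1+z)⁻¹ := by linarith
        have hd := pow_sub_pow_le' ((1+z)⁻¹) (Real.exp (-z)) hb0 hba m
        have hquad := bern2 z hz (m+1)
        have hpowpos : (0:ℝ) < (1+z)^(m+1) := pow_pos h1z _
        have ham : (0:ℝ) ≤ ((1+z)⁻¹)^m := pow_nonneg hu.le m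
        have hchain : ((1+z)⁻¹)^(m+1) - (Real.exp (-z))^(m+1)
            ≤ ((m:ℝ)+1) * z^2/2 * ((1+z)⁻¹)^(m+1) := by
          calc ((1+z)⁻¹)^(m+1) - (Real.exp (-z))^(m+1)
              ≤ ((m:ℝ)+1) * ((1+z)⁻¹)^m * ((1+z)⁻¹ - Real.exp (-z)) := hd
            _ ≤ ((m:ℝ)+1) * ((1+z)⁻¹)^m * (z^2/2 * (1+z)⁻¹) := by
                apply mul_le_mul_of_nonneg_left hab
                positivity
            _ = ((m:ℝ)+1) * z^2/2 * (((1+z)⁻¹)^m * (1+z)⁻¹) := by ring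
            _ = ((m:ℝ)+1) * z^2/2 * ((1+z)⁻¹)^(m+1) := by rw [← pow_succ]
        have hsq : z^2 ≤ z := by nlinarith
        have hfin : ((m:ℝ)+1) * z^2/2 * ((1+z)⁻¹)^(m+1) ≤ 1 / ((m:ℝ)+1+1) := by
          rw [inv_pow, inv_eq_one_div, mul_one_div,
            div_le_div_iff₀ hpowpos (by positivity)]
          push_cast at hquad
          nlinarith [hquad, mul_le_mul_of_nonneg_left hsq (Nat.cast_nonneg (α := ℝ) m)]
        rw [hinv, hexp]
        push_cast
        linarith [hchain, hfin]
    · -- case 1 ≤ z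
      have hbern : 1 + (n:ℝ)*z ≤ (1+z)^n := by
        have := one_add_mul_le_pow (a := z) (by linarith) n
        linarith
      have h2 : ((1+z)^n)⁻¹ ≤ 1/((n:ℝ)+1) := by
        rw [inv_eq_one_div, div_le_div_iff₀ (pow_pos h1z n) (by positivity)]
        nlinarith [hbern, mul_le_mul_of_nonneg_left hz1.le (Nat.cast_nonneg (α := ℝ) n)]
      have := Real.exp_pos (-(n*z))
      linarith

/-- **Lemma (elementary inequality).** For every `n ∈ ℕ` and `z ∈ [0,∞)`,
`0 ≤ (1+z)^{−n} − e^{−nz} ≤ 1/(n+1)`; in particular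
`sup_{n} sup_{z>0} n |(1+z)^{−n} − e^{−nz}| < ∞`. -/
theorem implicit_euler_exponential_inequality :
    (∀ (n : ℕ) (z : ℝ), 0 ≤ z →
      0 ≤ ((1 + z) ^ n)⁻¹ - Real.exp (-(n * z)) ∧
      ((1 + z) ^ n)⁻¹ - Real.exp (-(n * z)) ≤ 1 / (n + 1)) ∧
    (∃ M : ℝ, ∀ (n : ℕ) (z : ℝ), 0 < z →
      (n : ℝ) * |((1 + z) ^ n)⁻¹ - Real.exp (-(n * z))| ≤ M) := by
  refine ⟨fun n z hz => euler_key n z hz, ⟨1, fun n z hz => ?_⟩⟩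
  obtain ⟨h1, h2⟩ := euler_key n z hz.le
  rw [abs_of_nonneg h1]
  have hn : (0:ℝ) ≤ n := Nat.cast_nonneg n
  have hnp : (0:ℝ) < n + 1 := by linarith
  calc (n:ℝ) * (((1 + z) ^ n)⁻¹ - Real.exp (-(n * z))) ≤ (n:ℝ) * (1/((n:ℝ)+1)) :=
        mul_le_mul_of_nonneg_left h2 hn
    _ ≤ 1 := by rw [mul_one_div, div_le_one hnp]; linarith
end

section
/- Let γ be a standard real-valued Gaussian random variable (law N(0,1)) and fix Δt₀ ∈ (0,∞). Then there exists a constant C ∈ (0,∞) such that for all x ∈ ℝ^d and all Δt ∈ (0,Δt₀): (a) (𝔼[‖φ(√Δt γ, x) − Φ(√Δt γ, x)‖²])^{1/2} ≤ C Δt^{3/2}; and (b) if in addition for every x the mappings t ↦ φ(t,x) and t ↦ Φ(t,x) are of class C⁴ with sup_x |∂_t³φ(t,x)| + sup_x |∂_t⁴φ(t,x)| + sup_x |∂_t³Φ(t,x)| + sup_x |∂_t⁴Φ(t,x)| ≤ e^{C'|t|} for some C' ∈ (0,∞) and all t ∈ ℝ, then ‖𝔼[φ(√Δt γ, x)] −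 𝔼[Φ(√Δt γ, x)]‖ ≤ C Δt². -/
/-!
Write `f = φ(·, x) - Φ(·, x)` and `t = √Δt γ`. Part (a) is the pointwise bound
`‖f t‖ ≤ C |t|³ e^{C|t|}` integrated against the Gaussian law, all of whose exponential moments
are finite. For part (b) the same bound makes `f = O(t³)` at `0`, so `f(0) = f'(0) = f''(0) = 0`
and Taylor's theorem gives `f t = (t³/6) f'''(0) + O(t⁴ e^{C'|t|})`; the cubic term has mean zero
because `γ` is symmetric, which leaves `O(Δt²)`.
-/

open MeasureTheory ProbabilityTheory Real Set

open Filter Topology Asymptotics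
open scoped NNReal

theorem isBigO_pow_of_norm_le_mul_exp {E : Type*} [NormedAddCommGroup E] {f : ℝ → E} {n : ℕ}
    {C : ℝ} (hC : 0 ≤ C)
    (h : ∀ t, ‖f t‖ ≤ C * |t| ^ n * exp (C * |t|)) : f =O[𝓝 0] fun t => t ^ n := by
  refine IsBigO.of_bound (C * exp C) ?_
  filter_upwards [Icc_mem_nhds neg_one_lt_zero one_pos] with t ht
  have ht : |t| ≤ 1 := abs_le.2 ht
  calc ‖f t‖ ≤ C * |t| ^ n * exp (C * |t|) := h t
    _ ≤ C * |t| ^ n * exp C := by gcongr; exact mul_le_of_le_one_right hC ht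
    _ = C * exp C * ‖t ^ n‖ := by rw [norm_pow, Real.norm_eq_abs]; ring

section Taylor

open scoped Nat

variable {E : Type*} [NormedAddCommGroup E] [NormedSpace ℝ E] {f : ℝ → E} {n : ℕ}

theorem norm_sub_taylor_le_of_nonneg (hf : ContDiff ℝ (n + 1) f) {t M : ℝ} (ht : 0 ≤ t)
    (hM : ∀ y ∈ Icc 0 t, ‖iteratedDeriv (n + 1) f y‖ ≤ M) :
    ‖f t - ∑ k ∈ Finset.range (n + 1), ((k ! : ℝ)⁻¹ * t ^ k) • iteratedDeriv k f 0‖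
      ≤ M * t ^ (n + 1) / n ! := by
  rcases ht.eq_or_lt with rfl | ht
  · simp [Finset.sum_range_succ']
  have hwithin : ∀ k ≤ n + 1, ∀ y ∈ Icc 0 t,
      iteratedDerivWithin k f (Icc 0 t) y = iteratedDeriv k f y := fun k hk y hy =>
    iteratedDerivWithin_eq_iteratedDeriv (uniqueDiffOn_Icc ht)
      (hf.of_le (by exact_mod_cast hk)).contDiffAt hy
  have h := taylor_mean_remainder_bound ht.le hf.contDiffOn (right_mem_Icc.2 ht.le)
    fun y hy => (hwithin _ le_rfl y hy).symm ▸ hM y hy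
  simp only [taylor_within_apply, sub_zero] at h
  convert h using 4 with k hk
  rw [hwithin k (Finset.mem_range.1 hk).le 0 (left_mem_Icc.2 ht.le)]

theorem norm_sub_taylor_le (hf : ContDiff ℝ (n + 1) f) {t M : ℝ}
    (hM : ∀ y, |y| ≤ |t| → ‖iteratedDeriv (n + 1) f y‖ ≤ M) :
    ‖f t - ∑ k ∈ Finset.range (n + 1), ((k ! : ℝ)⁻¹ * t ^ k) • iteratedDeriv k f 0‖
      ≤ M * |t| ^ (n + 1) / n ! := by
  rcases le_total 0 t with ht | ht
  · rw [abs_of_nonneg ht]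
    exact norm_sub_taylor_le_of_nonneg hf ht fun y hy =>
      hM y (abs_le_abs_of_nonneg hy.1 hy.2)
  · have h := norm_sub_taylor_le_of_nonneg (f := fun y => f (-y)) (hf.comp contDiff_neg)
      (neg_nonneg.2 ht) (M := M) fun y hy => by
        rw [iteratedDeriv_comp_neg, norm_smul, norm_pow, norm_neg, norm_one, one_pow, one_mul]
        exact hM _ (by rw [abs_neg, abs_of_nonneg hy.1, abs_of_nonpos ht]; exact hy.2)
    rw [abs_of_nonpos ht]
    rw [neg_neg] at h
    convert h using 4 with k
    rw [iteratedDeriv_comp_neg, neg_zero, smul_smul, mul_assoc, ← mul_pow, neg_mul_neg, mul_one]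

theorem eq_zero_of_pow_smul_isLittleO {a : E} {k : ℕ}
    (h : (fun t : ℝ => t ^ k • a) =o[𝓝 0] fun t => t ^ k) : a = 0 := by
  by_contra ha
  have hfreq : ∃ᶠ t in 𝓝 (0 : ℝ), t ^ k ≠ 0 :=
    ((eventually_mem_nhdsWithin (s := {0}ᶜ)).mono fun t ht => pow_ne_zero k ht).frequently
      |>.filter_mono nhdsWithin_le_nhds
  refine isLittleO_irrefl hfreq ?_
  rw [← isLittleO_norm_left] at h ⊢
  simp only [norm_smul] at h
  simpa only [mul_comm, isLittleO_const_mul_left_iff (norm_ne_zero_iff.2 ha)] using h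

theorem iteratedDeriv_eq_zero_of_isBigO (hf : ContDiff ℝ n f)
    (h : f =O[𝓝 0] fun t => t ^ (n + 1)) {k : ℕ} (hk : k ≤ n) : iteratedDeriv k f 0 = 0 := by
  induction k using Nat.strong_induction_on with
  | _ k ih =>
  have htaylor : taylorWithinEval f k univ 0 =
      fun t => t ^ k • ((k ! : ℝ)⁻¹ • iteratedDeriv k f 0) := by
    ext t
    rw [taylor_within_apply, Finset.sum_range_succ, Finset.sum_eq_zero fun j hj => ?_]
    · simp [smul_smul, mul_comm]
    · rw [iteratedDerivWithin_univ, ih j (Finset.mem_range.1 hj) (by grind), smul_zero]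
  have hrem := taylor_isLittleO_univ (hf.of_le (by exact_mod_cast hk)) (x₀ := 0)
  simp only [sub_zero, htaylor] at hrem
  have hsmall : f =o[𝓝 0] fun t => t ^ k := h.trans_isLittleO (isLittleO_pow_pow (by omega))
  simpa [Nat.factorial_ne_zero] using
    eq_zero_of_pow_smul_isLittleO <| (hsmall.sub hrem).congr_left fun t => sub_sub_cancel _ _

theorem norm_sub_cube_taylor_le (hf : ContDiff ℝ 4 f) (h : f =O[𝓝 0] fun t => t ^ 3) {t M : ℝ}
    (hM : ∀ y, |y| ≤ |t| → ‖iteratedDeriv 4 f y‖ ≤ M) :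
    ‖f t - (t ^ 3 / 6) • iteratedDeriv 3 f 0‖ ≤ M * t ^ 4 / 6 := by
  have hlow : ∀ k ≤ 2, iteratedDeriv k f 0 = 0 := fun k hk =>
    iteratedDeriv_eq_zero_of_isBigO (hf.of_le (by norm_num)) h hk
  have := norm_sub_taylor_le (n := 3) hf hM
  simp only [Finset.sum_range_succ, Finset.range_zero, Finset.sum_empty, hlow 0 (by norm_num),
    hlow 1 (by norm_num), hlow 2 (by norm_num), smul_zero, zero_add] at this
  convert this using 3
  · simp [Nat.factorial, div_eq_inv_mul]
  · exact (Even.pow_abs ⟨2, rfl⟩ t).symm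
  · simp [Nat.factorial]

end Taylor

theorem integral_pow_gaussianReal_of_odd {n : ℕ} (hn : Odd n) (v : ℝ≥0) :
    ∫ x, x ^ n ∂gaussianReal 0 v = 0 := by
  have h := integral_map (μ := gaussianReal 0 v) measurable_neg.aemeasurable
    (continuous_pow n).aestronglyMeasurable
  rw [gaussianReal_map_neg, neg_zero] at h
  simp only [hn.neg_pow, integral_neg] at h
  linarith

section GaussianSample

variable {Ω E : Type*} [MeasurableSpace Ω] {P : Measure Ω} [IsProbabilityMeasure P] {X : Ω → ℝ}
  {μ : ℝ} {v : ℝ≥0} [NormedAddCommGroup E]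

theorem ProbabilityTheory.HasLaw.integrable_pow_abs_mul_exp_mul_abs
    (hX : HasLaw X (gaussianReal μ v) P) (n : ℕ) {c : ℝ} (hc : 0 ≤ c) :
    Integrable (fun ω => |X ω| ^ n * exp (c * |X ω|)) P := by
  have hexp (t : ℝ) : Integrable (fun ω => exp (t * X ω)) P := by
    rw [← mgf_pos_iff, mgf_gaussianReal hX.map_eq]
    positivity
  simpa using integrable_pow_abs_mul_exp_add_of_integrable_exp_mul (v := 0) (t := c + 1)
    (hexp _) (hexp _) hc (by rw [abs_of_pos (by linarith)]; linarith) n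

theorem ProbabilityTheory.HasLaw.integrable_comp_mul (hX : HasLaw X (gaussianReal μ v) P)
    {g : ℝ → E} (hg : Continuous g) {A B c : ℝ} {n : ℕ} (hc : 0 ≤ c)
    (hbound : ∀ t, ‖g t‖ ≤ A + B * |t| ^ n * exp (c * |t|)) (s : ℝ) :
    Integrable (fun ω => g (s * X ω)) P := by
  refine Integrable.mono' ((integrable_const A).add
      ((hX.integrable_pow_abs_mul_exp_mul_abs n (mul_nonneg hc (abs_nonneg s))).const_mul
        (B * |s| ^ n)))
    (hg.comp_aestronglyMeasurable (hX.aemeasurable.const_mul s).aestronglyMeasurable)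
    (ae_of_all _ fun ω => (hbound _).trans_eq ?_)
  simp only [Pi.add_apply, abs_mul, mul_pow]
  ring_nf

theorem ProbabilityTheory.HasLaw.rpow_integral_norm_rpow_two_le
    (hX : HasLaw X (gaussianReal μ v) P) {g : ℝ → E} {C : ℝ} (hC : 0 ≤ C) (hg : ∀ t, ‖g t‖ ≤ C * |t| ^ 3 * exp (C * |t|)) {Δt Δt₀ : ℝ}
    (hΔt : 0 ≤ Δt) (hΔt₀ : Δt ≤ Δt₀) :
    (∫ ω, ‖g (√Δt * X ω)‖ ^ (2 : ℝ) ∂P) ^ ((1 : ℝ) / 2)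
      ≤ C * √(∫ ω, |X ω| ^ 6 * exp (2 * C * √Δt₀ * |X ω|) ∂P) * Δt ^ ((3 : ℝ) / 2) := by
  set M := ∫ ω, |X ω| ^ 6 * exp (2 * C * √Δt₀ * |X ω|) ∂P
  have hpointwise (ω : Ω) : ‖g (√Δt * X ω)‖ ^ (2 : ℝ)
      ≤ C ^ 2 * Δt ^ 3 * (|X ω| ^ 6 * exp (2 * C * √Δt₀ * |X ω|)) := by
    have hsqrt : √Δt ≤ √Δt₀ := Real.sqrt_le_sqrt hΔt₀
    calc ‖g (√Δt * X ω)‖ ^ (2 : ℝ)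
        ≤ (C * (√Δt * |X ω|) ^ 3 * exp (C * (√Δt * |X ω|))) ^ 2 := by
          have h := hg (√Δt * X ω)
          rw [abs_mul, abs_of_nonneg (Real.sqrt_nonneg _)] at h
          rw [Real.rpow_two]
          gcongr
      _ = C ^ 2 * √Δt ^ 6 * (|X ω| ^ 6 * exp (2 * C * √Δt * |X ω|)) := by
          rw [mul_pow, mul_pow, ← Real.exp_nat_mul]; ring_nf
      _ ≤ C ^ 2 * Δt ^ 3 * (|X ω| ^ 6 * exp (2 * C * √Δt₀ * |X ω|)) := by
          rw [show √Δt ^ 6 = Δt ^ 3 by rw [show 6 = 2 * 3 from rfl, pow_mul, Real.sq_sqrt hΔt]]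
          gcongr
  have hint := integral_mono_of_nonneg (ae_of_all _ fun ω => by positivity)
    ((hX.integrable_pow_abs_mul_exp_mul_abs 6 (by positivity)).const_mul _)
    (ae_of_all _ hpointwise)
  rw [integral_const_mul] at hint
  calc (∫ ω, ‖g (√Δt * X ω)‖ ^ (2 : ℝ) ∂P) ^ ((1 : ℝ) / 2)
      ≤ (C ^ 2 * Δt ^ 3 * M) ^ ((1 : ℝ) / 2) :=
        Real.rpow_le_rpow (integral_nonneg fun ω => by positivity) hint (by norm_num)
    _ = C * √M * Δt ^ ((3 : ℝ) / 2) := by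
        rw [← Real.sqrt_eq_rpow, Real.sqrt_mul (by positivity), Real.sqrt_mul (by positivity),
          Real.sqrt_sq hC, Real.sqrt_eq_rpow, ← Real.rpow_natCast, ← Real.rpow_mul hΔt]
        norm_num
        ring

theorem ProbabilityTheory.HasLaw.norm_integral_comp_sqrt_mul_le [NormedSpace ℝ E]
    [CompleteSpace E] (hX : HasLaw X (gaussianReal 0 v) P) {f : ℝ → E} (hf : ContDiff ℝ 4 f)
    (hO : f =O[𝓝 0] fun t => t ^ 3) {c : ℝ} (hc : 0 ≤ c)
    (h4 : ∀ t, ‖iteratedDeriv 4 f t‖ ≤ exp (c * |t|)) {Δt Δt₀ : ℝ} (hΔt : 0 ≤ Δt)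
    (hΔt₀ : Δt ≤ Δt₀) :
    ‖∫ ω, f (√Δt * X ω) ∂P‖ ≤ (∫ ω, |X ω| ^ 4 * exp (c * √Δt₀ * |X ω|) ∂P) / 6 * Δt ^ 2 := by
  set a := iteratedDeriv 3 f 0
  set cubic : ℝ → E := fun t => (t ^ 3 / 6) • a
  have hrem (t : ℝ) : ‖f t - cubic t‖ ≤ exp (c * |t|) * t ^ 4 / 6 :=
    norm_sub_cube_taylor_le hf hO fun y hy => (h4 y).trans (by gcongr)
  have hcubic_int : Integrable (fun ω => cubic (√Δt * X ω)) P :=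
    hX.integrable_comp_mul (by fun_prop) (A := 0) (B := ‖a‖ / 6) (n := 3) le_rfl
      (fun t => le_of_eq (by simp [cubic, norm_smul]; ring)) _
  have hrem_int : Integrable (fun ω => f (√Δt * X ω) - cubic (√Δt * X ω)) P :=
    hX.integrable_comp_mul (g := fun t => f t - cubic t) (hf.continuous.sub (by fun_prop))
      (A := 0) (B := 1 / 6) (n := 4) hc
      (fun t => (hrem t).trans_eq (by rw [← (Even.pow_abs ⟨2, rfl⟩ t)]; ring)) _
  have hcubic_mean : ∫ ω, cubic (√Δt * X ω) ∂P = 0 := by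
    have h3 : ∫ ω, X ω ^ 3 ∂P = 0 := (hX.integral_comp (f := fun x => x ^ 3)
      (continuous_pow 3).aestronglyMeasurable).trans (integral_pow_gaussianReal_of_odd ⟨1, rfl⟩ v)
    simp only [cubic, mul_pow, mul_div_right_comm _ (X _ ^ 3)]
    rw [integral_smul_const, integral_const_mul, h3, mul_zero, zero_smul]
  have hpointwise (ω : Ω) : ‖f (√Δt * X ω) - cubic (√Δt * X ω)‖
      ≤ Δt ^ 2 / 6 * (|X ω| ^ 4 * exp (c * √Δt₀ * |X ω|)) := by
    refine (hrem _).trans ?_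
    rw [abs_mul, abs_of_nonneg (Real.sqrt_nonneg _), mul_pow,
      show √Δt ^ 4 = Δt ^ 2 by rw [show 4 = 2 * 2 from rfl, pow_mul, Real.sq_sqrt hΔt],
      ← Even.pow_abs ⟨2, rfl⟩ (X ω)]
    have hexp : exp (c * (√Δt * |X ω|)) ≤ exp (c * √Δt₀ * |X ω|) := by
      rw [← mul_assoc]; gcongr
    calc exp (c * (√Δt * |X ω|)) * (Δt ^ 2 * |X ω| ^ 4) / 6
        ≤ exp (c * √Δt₀ * |X ω|) * (Δt ^ 2 * |X ω| ^ 4) / 6 := by gcongr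
      _ = _ := by ring
  calc ‖∫ ω, f (√Δt * X ω) ∂P‖
      = ‖∫ ω, (f (√Δt * X ω) - cubic (√Δt * X ω)) ∂P‖ := by
        rw [← add_zero (∫ ω, (f _ - _) ∂P), ← hcubic_mean, ← integral_add hrem_int hcubic_int]
        simp only [sub_add_cancel]
    _ ≤ ∫ ω, ‖f (√Δt * X ω) - cubic (√Δt * X ω)‖ ∂P := norm_integral_le_integral_norm _
    _ ≤ ∫ ω, Δt ^ 2 / 6 * (|X ω| ^ 4 * exp (c * √Δt₀ * |X ω|)) ∂P :=
        integral_mono_of_nonneg (ae_of_all _ fun _ => norm_nonneg _)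
          ((hX.integrable_pow_abs_mul_exp_mul_abs 4 (by positivity)).const_mul _)
          (ae_of_all _ hpointwise)
    _ = _ := by rw [integral_const_mul]; ring

theorem ProbabilityTheory.HasLaw.norm_integral_sub_integral_comp_sqrt_mul_le [NormedSpace ℝ E]
    [CompleteSpace E] (hX : HasLaw X (gaussianReal 0 v) P) {F G : ℝ → E} (hF : ContDiff ℝ 4 F)
    (hG : ContDiff ℝ 4 G) {C c : ℝ} (hC : 0 ≤ C) (hc : 0 ≤ c)
    (hFG : ∀ t, ‖F t - G t‖ ≤ C * |t| ^ 3 * exp (C * |t|))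
    (hG0 : ∀ t, ‖G t - G 0‖ ≤ C * |t| * exp (C * |t|))
    (h4 : ∀ t, ‖iteratedDeriv 4 F t‖ + ‖iteratedDeriv 4 G t‖ ≤ exp (c * |t|)) {Δt Δt₀ : ℝ}
    (hΔt : 0 ≤ Δt) (hΔt₀ : Δt ≤ Δt₀) :
    ‖(∫ ω, F (√Δt * X ω) ∂P) - ∫ ω, G (√Δt * X ω) ∂P‖
      ≤ (∫ ω, |X ω| ^ 4 * exp (c * √Δt₀ * |X ω|) ∂P) / 6 * Δt ^ 2 := by
  have hG_int := hX.integrable_comp_mul hG.continuous (A := ‖G 0‖) (B := C) (n := 1) hC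
    (fun t => by rw [pow_one]; linarith [norm_sub_norm_le (G t) (G 0), hG0 t]) (√Δt)
  have hFG_int := hX.integrable_comp_mul (hF.sub hG).continuous (A := 0) hC
    (fun t => (hFG t).trans_eq (zero_add _).symm) (√Δt)
  rw [← integral_sub ((hFG_int.add hG_int).congr (ae_of_all _ fun ω => sub_add_cancel _ _))
    hG_int]
  refine hX.norm_integral_comp_sqrt_mul_le (hF.sub hG) (isBigO_pow_of_norm_le_mul_exp hC hFG) hc
    (fun t => ?_) hΔt hΔt₀
  rw [iteratedDeriv_fun_sub hF.contDiffAt hG.contDiffAt]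
  exact (norm_sub_le _ _).trans (h4 t)

end GaussianSample

theorem gaussian_local_error_general
    {d : ℕ} {Ω : Type*} [MeasurableSpace Ω] (P : Measure Ω) [IsProbabilityMeasure P]
    (φ : ℝ → EuclideanSpace ℝ (Fin d) → EuclideanSpace ℝ (Fin d))
    (Φ : ℝ → EuclideanSpace ℝ (Fin d) → EuclideanSpace ℝ (Fin d))
    (C : ℝ) (hCpos : 0 < C)
    (hΦord : ∀ (t : ℝ) x, ‖Φ t x - φ t x‖ ≤ C * |t| ^ 3 * Real.exp (C * |t|))
    (hΦlip : ∀ (t₁ t₂ : ℝ) (x₁ x₂ : EuclideanSpace ℝ (Fin d)),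
      ‖Φ t₂ x₂ - Φ t₁ x₁‖ ≤ C * (|t₂ - t₁| + ‖x₂ - x₁‖) * Real.exp (C * (|t₁| + |t₂|)))
    (γ : Ω → ℝ) (hγmeas : Measurable γ)
    (hγ : Measure.map γ P = gaussianReal 0 1)
    (Δt₀ : ℝ) :
    ∃ CC : ℝ, 0 < CC ∧
      (∀ (x : EuclideanSpace ℝ (Fin d)), ∀ Δt ∈ Ioo (0:ℝ) Δt₀,
        (∫ ω, ‖φ (Real.sqrt Δt * γ ω) x - Φ (Real.sqrt Δt * γ ω) x‖ ^ (2 : ℝ) ∂P)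
            ^ ((1 : ℝ) / 2)
          ≤ CC * Δt ^ ((3 : ℝ) / 2)) ∧
      (((∀ x, ContDiff ℝ 4 (fun t : ℝ => φ t x) ∧ ContDiff ℝ 4 (fun t : ℝ => Φ t x)) ∧
          ∃ C' : ℝ, 0 < C' ∧ ∀ (t : ℝ) (x : EuclideanSpace ℝ (Fin d)),
            ‖iteratedDeriv 3 (fun s => φ s x) t‖ + ‖iteratedDeriv 4 (fun s => φ s x) t‖
              + ‖iteratedDeriv 3 (fun s => Φ s x) t‖ + ‖iteratedDeriv 4 (fun s => Φ s x) t‖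
              ≤ Real.exp (C' * |t|)) →
        ∀ (x : EuclideanSpace ℝ (Fin d)), ∀ Δt ∈ Ioo (0:ℝ) Δt₀,
          ‖(∫ ω, φ (Real.sqrt Δt * γ ω) x ∂P) - ∫ ω, Φ (Real.sqrt Δt * γ ω) x ∂P‖
            ≤ CC * Δt ^ 2) := by
  have hX : HasLaw γ (gaussianReal 0 1) P := ⟨hγmeas.aemeasurable, hγ⟩
  have hloc (x : EuclideanSpace ℝ (Fin d)) (t : ℝ) :
      ‖φ t x - Φ t x‖ ≤ C * |t| ^ 3 * exp (C * |t|) := norm_sub_rev (Φ t x) (φ t x) ▸ hΦord t x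
  set Ka := C * √(∫ ω, |γ ω| ^ 6 * exp (2 * C * √Δt₀ * |γ ω|) ∂P)
  have hKa : 0 ≤ Ka := by positivity
  have partA (x : EuclideanSpace ℝ (Fin d)) (Δt : ℝ) (hΔt : Δt ∈ Ioo 0 Δt₀) {K : ℝ} (hK : Ka ≤ K) :=
    (hX.rpow_integral_norm_rpow_two_le hCpos.le (hloc x) hΔt.1.le hΔt.2.le).trans
      (mul_le_mul_of_nonneg_right hK (rpow_nonneg hΔt.1.le _))
  by_cases hB : ∃ C' : ℝ, 0 < C' ∧ ∀ (t : ℝ) (x : EuclideanSpace ℝ (Fin d)),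
      ‖iteratedDeriv 3 (fun s => φ s x) t‖ + ‖iteratedDeriv 4 (fun s => φ s x) t‖
        + ‖iteratedDeriv 3 (fun s => Φ s x) t‖ + ‖iteratedDeriv 4 (fun s => Φ s x) t‖
        ≤ exp (C' * |t|)
  swap
  · exact ⟨Ka + 1, by positivity, fun x Δt hΔt => partA x Δt hΔt (by linarith),
      fun ⟨_, hC'⟩ => absurd hC' hB⟩
  obtain ⟨C', hC', hder⟩ := hB
  set Kb := (∫ ω, |γ ω| ^ 4 * exp (C' * √Δt₀ * |γ ω|) ∂P) / 6 with hKb_def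
  have hKb : 0 ≤ Kb := div_nonneg (integral_nonneg fun ω => by positivity) (by norm_num)
  refine ⟨Ka + Kb + 1, by positivity, fun x Δt hΔt => partA x Δt hΔt (by linarith),
    fun ⟨hreg, _⟩ x Δt hΔt => ?_⟩
  refine (hX.norm_integral_sub_integral_comp_sqrt_mul_le (hreg x).1 (hreg x).2 hCpos.le hC'.le
    (hloc x) (fun t => by simpa using hΦlip 0 t x x) (fun t => ?_) hΔt.1.le hΔt.2.le).trans ?_
  · linarith [hder t x, norm_nonneg (iteratedDeriv 3 (fun s => φ s x) t),
      norm_nonneg (iteratedDeriv 3 (fun s => Φ s x) t)]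
  gcongr
  linarith [hKb_def]

/-- **Lemma (local error estimates under Gaussian input).** With `γ ~ N(0,1)` and
`Δt₀ ∈ (0,∞)`, there is `C ∈ (0,∞)` such that for all `x` and `Δt ∈ (0,Δt₀)`:
(a) `(𝔼[‖φ(√Δt γ, x) − Φ(√Δt γ, x)‖²])^{1/2} ≤ C Δt^{3/2}`; and (b) if in addition
`t ↦ φ(t,x)` and `t ↦ Φ(t,x)` are `C⁴` with exponentially bounded third and fourth
derivatives, then `‖𝔼[φ(√Δt γ, x)] − 𝔼[Φ(√Δt γ, x)]‖ ≤ C Δt²`. -/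
theorem gaussian_local_error
    {d : ℕ} {Ω : Type*} [MeasurableSpace Ω] (P : Measure Ω) [IsProbabilityMeasure P]
    (σ : EuclideanSpace ℝ (Fin d) → EuclideanSpace ℝ (Fin d))
    (hσ : ContDiff ℝ 3 σ) (Cσ : ℝ)
    (hσbd : ∀ k : ℕ, k ≤ 3 → ∀ x, ‖iteratedFDeriv ℝ k σ x‖ ≤ Cσ)
    (φ : ℝ → EuclideanSpace ℝ (Fin d) → EuclideanSpace ℝ (Fin d))
    (hφ0 : ∀ x, φ 0 x = x)
    (hφd : ∀ (t : ℝ) (x : EuclideanSpace ℝ (Fin d)),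
      HasDerivAt (fun s => φ s x) (σ (φ t x)) t)
    (Φ : ℝ → EuclideanSpace ℝ (Fin d) → EuclideanSpace ℝ (Fin d))
    (hΦreg : ContDiff ℝ 3 (fun q : ℝ × EuclideanSpace ℝ (Fin d) => Φ q.1 q.2))
    (C : ℝ) (hCpos : 0 < C)
    (hΦord : ∀ (t : ℝ) x, ‖Φ t x - φ t x‖ ≤ C * |t| ^ 3 * Real.exp (C * |t|))
    (hΦlip : ∀ (t₁ t₂ : ℝ) (x₁ x₂ : EuclideanSpace ℝ (Fin d)),
      ‖Φ t₂ x₂ - Φ t₁ x₁‖ ≤ C * (|t₂ - t₁| + ‖x₂ - x₁‖) * Real.exp (C * (|t₁| + |t₂|)))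
    (hΦder : ∀ k : ℕ, k ≤ 3 → ∀ (t : ℝ) (x : EuclideanSpace ℝ (Fin d)),
      ‖iteratedFDeriv ℝ k (fun q : ℝ × EuclideanSpace ℝ (Fin d) => Φ q.1 q.2) (t, x)‖
        ≤ C * Real.exp (C * |t|))
    (γ : Ω → ℝ) (hγmeas : Measurable γ)
    (hγ : Measure.map γ P = gaussianReal 0 1)
    (Δt₀ : ℝ) (hΔt₀ : 0 < Δt₀) :
    ∃ CC : ℝ, 0 < CC ∧
      (∀ (x : EuclideanSpace ℝ (Fin d)), ∀ Δt ∈ Ioo (0:ℝ) Δt₀,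
        (∫ ω, ‖φ (Real.sqrt Δt * γ ω) x - Φ (Real.sqrt Δt * γ ω) x‖ ^ (2 : ℝ) ∂P)
            ^ ((1 : ℝ) / 2)
          ≤ CC * Δt ^ ((3 : ℝ) / 2)) ∧
      (((∀ x, ContDiff ℝ 4 (fun t : ℝ => φ t x) ∧ ContDiff ℝ 4 (fun t : ℝ => Φ t x)) ∧
          ∃ C' : ℝ, 0 < C' ∧ ∀ (t : ℝ) (x : EuclideanSpace ℝ (Fin d)),
            ‖iteratedDeriv 3 (fun s => φ s x) t‖ + ‖iteratedDeriv 4 (fun s => φ s x) t‖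
              + ‖iteratedDeriv 3 (fun s => Φ s x) t‖ + ‖iteratedDeriv 4 (fun s => Φ s x) t‖
              ≤ Real.exp (C' * |t|)) →
        ∀ (x : EuclideanSpace ℝ (Fin d)), ∀ Δt ∈ Ioo (0:ℝ) Δt₀,
          ‖(∫ ω, φ (Real.sqrt Δt * γ ω) x ∂P) - ∫ ω, Φ (Real.sqrt Δt * γ ω) x ∂P‖
            ≤ CC * Δt ^ 2) :=
  gaussian_local_error_general P φ Φ C hCpos hΦord hΦlip γ hγmeas hγ Δt₀
end
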